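/- arXiv:1305.1751 — 5 statements merged into one kernel-verified Lean document; each statement's English description precedes it below -/
import Mathlib

section
/- Under assumption (A_F), there exists a measurable function f : [0,∞)^ℕ → [0,∞) such that the strictly stationary ergodic solution (Y_t, λ_t)_{t∈ℤ} of model (1) satisfies λ_t = f(Y_{t−1}, Y_{t−2}, …) almost surely for every t ∈ ℤ. -/
open MeasureTheory ProbabilityTheory Filter Topology Matrix

noncomputable section

/-- The infinite past `(Y_{t-1}, Y_{t-2}, …)` of the process `Y` at time `t`. -/
def past {Ω : Type} (Y : ℤ → Ω → ℕ) (t : ℤ) (ω : Ω) : ℕ → ℝ :=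
  fun j => (Y (t - 1 - j) ω : ℝ)

/-- The truncated past `(Y_{t-1}, …, Y_1, 0, 0, …)` used in the approximated likelihood. -/
def pastTrunc {Ω : Type} (Y : ℤ → Ω → ℕ) (t : ℕ) (ω : Ω) : ℕ → ℝ :=
  fun j => if (j : ℤ) < (t : ℤ) - 1 then (Y ((t : ℤ) - 1 - j) ω : ℝ) else 0

/-- The filtration `F_t = σ(Y_s : s ≤ t)`. -/
def Filt {Ω : Type} [MeasurableSpace Ω] (Y : ℤ → Ω → ℕ) (t : ℤ) : MeasurableSpace Ω :=
  ⨆ s : {s : ℤ // s ≤ t}, MeasurableSpace.comap (Y s) ⊤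

/-- The shift on two-sided integer-valued paths. -/
def shiftZ : (ℤ → ℕ) → (ℤ → ℕ) := fun x t => x (t + 1)

/-- The law of the path `(Y_t)_{t ∈ ℤ}` on `ℕ^ℤ`. -/
def pathLaw {Ω : Type} [MeasurableSpace Ω] (P : Measure Ω) (Y : ℤ → Ω → ℕ) :
    Measure (ℤ → ℕ) :=
  Measure.map (fun ω t => Y t ω) P

/-- `Y` is a stationary ergodic solution of model (3) with parameter `θ₀` :
conditionally on the past, `Y_t` is Poisson with intensity `λ_t = f_{θ₀}(Y_{t-1}, Y_{t-2}, …)`,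
the path law is shift-invariant and shift-ergodic, and `Y_0` has moments of every order. -/
structure IsStatSol {Ω : Type} [MeasurableSpace Ω] {d : ℕ} (P : Measure Ω)
    (f : (Fin d → ℝ) → (ℕ → ℝ) → ℝ) (θ₀ : Fin d → ℝ) (Y : ℤ → Ω → ℕ) : Prop where
  meas : ∀ t, Measurable (Y t)
  erg : Ergodic shiftZ (pathLaw P Y)
  moments : ∀ r : ℕ, 1 ≤ r → Integrable (fun ω => (Y 0 ω : ℝ) ^ r) P
  poisson : ∀ t : ℤ, ∀ k : ℕ,
    (P[(fun ω => if Y t ω = k then (1 : ℝ) else 0)|Filt Y (t - 1)]) =ᵐ[P]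
      fun ω => Real.exp (-(f θ₀ (past Y t ω))) * f θ₀ (past Y t ω) ^ k / (Nat.factorial k)

/-- Assumption A₀(Θ) : boundedness at `0` and a Lipschitz condition on `f_θ` with
summable coefficients of sum `< 1` (here `α j` stands for `α_{j+1}^{(0)}`). -/
structure AssumpA0 {d : ℕ} (Θ : Set (Fin d → ℝ)) (f : (Fin d → ℝ) → (ℕ → ℝ) → ℝ)
    (α : ℕ → ℝ) : Prop where
  nonneg : ∀ j, 0 ≤ α j
  summable : Summable α
  sum_lt_one : ∑' j, α j < 1
  bound0 : ∃ M : ℝ, ∀ θ ∈ Θ, |f θ (fun _ => 0)| ≤ M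
  lip : ∀ θ ∈ Θ, ∀ y y' : ℕ → ℝ, (∀ j, 0 ≤ y j) → (∀ j, 0 ≤ y' j) →
    ENNReal.ofReal |f θ y - f θ y'| ≤ ∑' j, ENNReal.ofReal (α j * |y j - y' j|)

/-- The gradient `∂f_θ(y)/∂θ` as a vector of `ℝ^d`. -/
def gradf {d : ℕ} (f : (Fin d → ℝ) → (ℕ → ℝ) → ℝ) (θ : Fin d → ℝ) (y : ℕ → ℝ) :
    Fin d → ℝ :=
  fun i => fderiv ℝ (fun θ' => f θ' y) θ (Pi.single i 1)

/-- The Hessian `∂²f_θ(y)/∂θ∂θᵀ` as a matrix. -/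
def hessf {d : ℕ} (f : (Fin d → ℝ) → (ℕ → ℝ) → ℝ) (θ : Fin d → ℝ) (y : ℕ → ℝ) :
    Fin d → Fin d → ℝ :=
  fun i j => fderiv ℝ (fun θ' => gradf f θ' y i) θ (Pi.single j 1)

/-- Assumption A₁(Θ) for the first derivative. -/
structure AssumpA1 {d : ℕ} (Θ : Set (Fin d → ℝ)) (f : (Fin d → ℝ) → (ℕ → ℝ) → ℝ)
    (α : ℕ → ℝ) : Prop where
  nonneg : ∀ j, 0 ≤ α j
  summable : Summable α
  bound0 : ∃ M : ℝ, ∀ θ ∈ Θ, ‖gradf f θ (fun _ => 0)‖ ≤ M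
  lip : ∀ θ ∈ Θ, ∀ y y' : ℕ → ℝ, (∀ j, 0 ≤ y j) → (∀ j, 0 ≤ y' j) →
    ENNReal.ofReal ‖gradf f θ y - gradf f θ y'‖ ≤ ∑' j, ENNReal.ofReal (α j * |y j - y' j|)

/-- Assumption A₂(Θ) for the second derivative. -/
structure AssumpA2 {d : ℕ} (Θ : Set (Fin d → ℝ)) (f : (Fin d → ℝ) → (ℕ → ℝ) → ℝ)
    (α : ℕ → ℝ) : Prop where
  nonneg : ∀ j, 0 ≤ α j
  summable : Summable α
  bound0 : ∃ M : ℝ, ∀ θ ∈ Θ, ‖hessf f θ (fun _ => 0)‖ ≤ M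
  lip : ∀ θ ∈ Θ, ∀ y y' : ℕ → ℝ, (∀ j, 0 ≤ y j) → (∀ j, 0 ≤ y' j) →
    ENNReal.ofReal ‖hessf f θ y - hessf f θ y'‖ ≤ ∑' j, ENNReal.ofReal (α j * |y j - y' j|)

/-- Assumption D(Θ). -/
def AssumpD {d : ℕ} (Θ : Set (Fin d → ℝ)) (f : (Fin d → ℝ) → (ℕ → ℝ) → ℝ) : Prop :=
  ∃ c : ℝ, 0 < c ∧ ∀ θ ∈ Θ, ∀ y : ℕ → ℝ, (∀ j, 0 ≤ y j) → c ≤ f θ y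

/-- Assumption Id(Θ). -/
def AssumpId {Ω : Type} [MeasurableSpace Ω] {d : ℕ} (P : Measure Ω)
    (Θ : Set (Fin d → ℝ)) (f : (Fin d → ℝ) → (ℕ → ℝ) → ℝ) (Y : ℤ → Ω → ℕ) : Prop :=
  ∀ θ ∈ Θ, ∀ θ' ∈ Θ,
    ((fun ω => f θ (past Y 0 ω)) =ᵐ[P] fun ω => f θ' (past Y 0 ω)) → θ = θ'

/-- Assumption Var(Θ) : the components of `∂_θ f_θ(Y_{-1}, …)` are a.s. linearly independent. -/
def AssumpVar {Ω : Type} [MeasurableSpace Ω] {d : ℕ} (P : Measure Ω)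
    (Θ : Set (Fin d → ℝ)) (f : (Fin d → ℝ) → (ℕ → ℝ) → ℝ) (Y : ℤ → Ω → ℕ) : Prop :=
  ∀ θ ∈ Θ, ∀ u : Fin d → ℝ, u ≠ 0 →
    0 < P {ω | (∑ i, u i * gradf f θ (past Y 0 ω) i) ≠ 0}

/-- Approximated log-likelihood term `ℓ̂_t(θ) = Y_t log f̂_θ^t − f̂_θ^t`. -/
def lhat {Ω : Type} {d : ℕ} (f : (Fin d → ℝ) → (ℕ → ℝ) → ℝ) (Y : ℤ → Ω → ℕ)
    (θ : Fin d → ℝ) (t : ℕ) (ω : Ω) : ℝ :=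
  (Y (t : ℤ) ω : ℝ) * Real.log (f θ (pastTrunc Y t ω)) - f θ (pastTrunc Y t ω)

/-- Approximated log-likelihood `L̂_n(T, θ)`. -/
def Lhat {Ω : Type} {d : ℕ} (f : (Fin d → ℝ) → (ℕ → ℝ) → ℝ) (Y : ℤ → Ω → ℕ)
    (T : Finset ℕ) (θ : Fin d → ℝ) (ω : Ω) : ℝ :=
  ∑ t ∈ T, lhat f Y θ t ω

/-- `est` is a measurable maximum likelihood estimator over `Θ`. -/
structure IsMLE {Ω : Type} [MeasurableSpace Ω] {d : ℕ} (Θ : Set (Fin d → ℝ))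
    (f : (Fin d → ℝ) → (ℕ → ℝ) → ℝ) (Y : ℤ → Ω → ℕ)
    (est : Finset ℕ → Ω → (Fin d → ℝ)) : Prop where
  mem : ∀ T ω, est T ω ∈ Θ
  max : ∀ T ω, ∀ θ ∈ Θ, Lhat f Y T θ ω ≤ Lhat f Y T (est T ω) ω

/-- The shift on two-sided paths with values in `ℕ × ℝ`. -/
def shiftZ' : (ℤ → ℕ × ℝ) → (ℤ → ℕ × ℝ) := fun x t => x (t + 1)

/-- **Proposition 1**: under assumption (A_F), the conditional mean `λ_t` of the strictly
stationary ergodic solution of model (1) can be written as a measurable function of the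
past observations: `λ_t = f(Y_{t−1}, Y_{t−2}, …)` a.s. for every `t`. -/
theorem intensity_function_of_past
    {Ω : Type} [MeasurableSpace Ω] (P : Measure Ω) [IsProbabilityMeasure P]
    (F : (ℕ → ℝ) → (ℕ → ℝ) → ℝ)
    (hF_meas : Measurable (Function.uncurry F))
    (hF_nonneg : ∀ l y : ℕ → ℝ, 0 ≤ F l y)
    (α : ℕ → ℝ) (hα_nonneg : ∀ j, 0 ≤ α j) (hα_sum : Summable α)
    (hα_lt1 : ∑' j, α j < 1)
    (hF_lip : ∀ l l' y y' : ℕ → ℝ, (∀ j, 0 < l j) → (∀ j, 0 < l' j) →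
      (∀ j, ∃ k : ℕ, y j = (k : ℝ)) → (∀ j, ∃ k : ℕ, y' j = (k : ℝ)) →
      ENNReal.ofReal |F l y - F l' y'| ≤
        ∑' j, ENNReal.ofReal (α j * (|l j - l' j| + |y j - y' j|)))
    (Y : ℤ → Ω → ℕ) (lam : ℤ → Ω → ℝ)
    (hY_meas : ∀ t, Measurable (Y t)) (hlam_meas : ∀ t, Measurable (lam t))
    (hlam_pos : ∀ t, ∀ᵐ ω ∂P, 0 < lam t ω)
    -- strict stationarity and ergodicity of the joint path `(Y_t, λ_t)_{t∈ℤ}`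
    (herg : Ergodic shiftZ' (Measure.map (fun ω t => (Y t ω, lam t ω)) P))
    -- finite moments of every order
    (hYmom : ∀ r : ℕ, 1 ≤ r → Integrable (fun ω => (Y 0 ω : ℝ) ^ r) P)
    (hlammom : ∀ r : ℕ, 1 ≤ r → Integrable (fun ω => lam 0 ω ^ r) P)
    -- the recursion `λ_t = F(λ_{t−1}, …; Y_{t−1}, …)`
    (hrec : ∀ t : ℤ, ∀ᵐ ω ∂P,
      lam t ω = F (fun j => lam (t - 1 - j) ω) (fun j => (Y (t - 1 - j) ω : ℝ)))
    -- conditionally on the past, `Y_t` is Poisson with intensity `λ_t`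
    (hpois : ∀ t : ℤ, ∀ k : ℕ,
      (P[(fun ω => if Y t ω = k then (1 : ℝ) else 0)|Filt Y (t - 1)]) =ᵐ[P]
        fun ω => Real.exp (-lam t ω) * lam t ω ^ k / (Nat.factorial k)) :
    ∃ f : (ℕ → ℝ) → ℝ, Measurable f ∧ (∀ y : ℕ → ℝ, (∀ j, 0 ≤ y j) → 0 ≤ f y) ∧
      ∀ t : ℤ, ∀ᵐ ω ∂P, lam t ω = f (past Y t ω) := by
    classical
  -- constants
  set κ : ℝ := ∑' j, α j with hκdef
  have hκ0 : 0 ≤ κ := tsum_nonneg hα_nonneg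
  set r : ℝ := (κ + 1) / 2 with hrdef
  have hκr : κ < r := by rw [hrdef]; linarith
  have hr1 : r < 1 := by rw [hrdef]; linarith
  have hr0 : 0 < r := by rw [hrdef]; linarith
  -- the approximating sequence of functions
  obtain ⟨fseq, hf0, hfS⟩ : ∃ g : ℕ → (ℕ → ℝ) → ℝ, g 0 = (fun _ => 0) ∧
      ∀ n, g (n + 1) = fun y => F (fun j => max (g n (fun i => y (j + 1 + i))) (r ^ n)) y :=
    ⟨fun n => Nat.rec (fun _ => (0:ℝ))
      (fun n gn y => F (fun j => max (gn (fun i => y (j + 1 + i))) (r ^ n)) y) n,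
      rfl, fun n => rfl⟩
  have hfseq_nonneg : ∀ n y, 0 ≤ fseq n y := by
    intro n
    induction n with
    | zero => intro y; rw [hf0]
    | succ n ih => intro y; rw [hfS]; exact hF_nonneg _ _
  have hfseq_meas : ∀ n, Measurable (fseq n) := by
    intro n
    induction n with
    | zero => rw [hf0]; exact measurable_const
    | succ n ih =>
      rw [hfS]
      have hL : Measurable fun y : ℕ → ℝ =>
          (fun j => max (fseq n (fun i => y (j + 1 + i))) (r ^ n)) :=
        measurable_pi_lambda _ fun j =>
          (ih.comp (measurable_pi_lambda _ fun i => measurable_pi_apply _)).max measurable_const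
      exact hF_meas.comp (hL.prodMk measurable_id)
  have hpast_meas : ∀ t : ℤ, Measurable (past Y t) :=
    fun t => measurable_pi_lambda _ fun j =>
      (measurable_from_top : Measurable (Nat.cast : ℕ → ℝ)).comp (hY_meas _)
  -- stationarity machinery
  have hpath0_meas : Measurable (fun ω => fun s : ℤ => (Y s ω, lam s ω)) :=
    measurable_pi_lambda _ fun s => (hY_meas s).prodMk (hlam_meas s)
  set μ : Measure (ℤ → ℕ × ℝ) := Measure.map (fun ω (t : ℤ) => (Y t ω, lam t ω)) P with hμ
  set psh : ℤ → (ℤ → ℕ × ℝ) → (ℤ → ℕ × ℝ) := fun t x s => x (s + t) with hpsh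
  have hpsh_meas : ∀ t, Measurable (psh t) :=
    fun t => measurable_pi_lambda _ fun s => measurable_pi_apply _
  have hcomp : ∀ t u : ℤ, psh t ∘ psh u = psh (u + t) := by
    intro t u; funext x s
    show x (s + t + u) = x (s + (u + t))
    congr 1; ring
  have h1 : Measure.map (psh 1) μ = μ := by
    have hid : psh 1 = shiftZ' := rfl
    rw [hid]
    exact herg.toMeasurePreserving.map_eq
  have hneg : Measure.map (psh (-1)) μ = μ := by
    conv_lhs => rw [← h1]
    rw [Measure.map_map (hpsh_meas _) (hpsh_meas _), hcomp]
    norm_num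
    have hid : psh 0 = id := by funext x s; show x (s + 0) = x s; rw [add_zero]
    rw [hid, Measure.map_id]
  have hinv : ∀ t : ℤ, Measure.map (psh t) μ = μ := by
    intro t
    induction t using Int.induction_on with
    | zero =>
      have hid : psh 0 = id := by funext x s; show x (s + 0) = x s; rw [add_zero]
      rw [hid, Measure.map_id]
    | succ n ih =>
      have : psh ((n : ℤ) + 1) = psh 1 ∘ psh n := (hcomp 1 n).symm
      rw [this, ← Measure.map_map (hpsh_meas 1) (hpsh_meas n), ih, h1]
    | pred n ih =>
      have : psh (-(n : ℤ) - 1) = psh (-1) ∘ psh (-n) := by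
        rw [hcomp]; exact congrArg psh (by ring)
      rw [this, ← Measure.map_map (hpsh_meas (-1)) (hpsh_meas (-n)), ih, hneg]
  have hmapt : ∀ t : ℤ,
      Measure.map (fun ω (s : ℤ) => (Y (s + t) ω, lam (s + t) ω)) P = μ := by
    intro t
    have hco : (fun ω (s : ℤ) => (Y (s + t) ω, lam (s + t) ω)) =
        psh t ∘ (fun ω (s : ℤ) => (Y s ω, lam s ω)) := rfl
    rw [hco, ← Measure.map_map (hpsh_meas t) hpath0_meas, ← hμ, hinv]
  -- the error terms
  set e : ℕ → ℤ → Ω → ℝ := fun n t ω => |lam t ω - fseq n (past Y t ω)| with he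
  have hemeas : ∀ n t, Measurable (e n t) := fun n t =>
    ((hlam_meas t).sub ((hfseq_meas n).comp (hpast_meas t))).abs
  -- invariance of the expected error
  have hEconst : ∀ (n : ℕ) (t : ℤ),
      (∫⁻ ω, ENNReal.ofReal (e n t ω) ∂P) = ∫⁻ ω, ENNReal.ofReal (e n 0 ω) ∂P := by
    have key : ∀ (n : ℕ) (t : ℤ),
        (∫⁻ ω, ENNReal.ofReal (e n t ω) ∂P) =
          ∫⁻ x, ENNReal.ofReal |(x 0).2 - fseq n (fun j : ℕ => ((x (-1 - (j : ℤ))).1 : ℝ))| ∂μ := by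
      intro n t
      set g : (ℤ → ℕ × ℝ) → ENNReal := fun x =>
        ENNReal.ofReal |(x 0).2 - fseq n (fun j : ℕ => ((x (-1 - (j : ℤ))).1 : ℝ))| with hg
      have hgmeas : Measurable g := by
        apply ENNReal.measurable_ofReal.comp
        apply Measurable.abs
        apply Measurable.sub
        · exact measurable_snd.comp (measurable_pi_apply 0)
        · exact (hfseq_meas n).comp (measurable_pi_lambda _ fun j =>
            (measurable_from_top : Measurable (Nat.cast : ℕ → ℝ)).comp
              (measurable_fst.comp (measurable_pi_apply _)))
      rw [← hmapt t, lintegral_map hgmeas (measurable_pi_lambda _ fun s =>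
        (hY_meas _).prodMk (hlam_meas _))]
      refine lintegral_congr fun ω => ?_
      have hB : (fun j : ℕ =>
          (((fun s : ℤ => (Y (s + t) ω, lam (s + t) ω)) (-1 - (j : ℤ))).1 : ℝ)) = past Y t ω := by
        funext j
        show ((Y (-1 - (j : ℤ) + t) ω : ℝ)) = (Y (t - 1 - (j : ℤ)) ω : ℝ)
        have : -1 - (j : ℤ) + t = t - 1 - (j : ℤ) := by ring
        rw [this]
      show ENNReal.ofReal (e n t ω) = ENNReal.ofReal |lam (0 + t) ω - fseq n _|
      rw [hB, zero_add]
    intro n t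
    rw [key n t, key n 0]
  -- pointwise recursive inequality
  have hstep : ∀ (n : ℕ) (t : ℤ), ∀ᵐ ω ∂P,
      ENNReal.ofReal (e (n + 1) t ω) ≤
        ∑' j : ℕ, ENNReal.ofReal (α j * (e n (t - 1 - (j : ℤ)) ω + r ^ n)) := by
    intro n t
    filter_upwards [hrec t, ae_all_iff.2 hlam_pos] with ω hω hpos
    have hy : ∀ j, ∃ k : ℕ, past Y t ω j = (k : ℝ) := fun j => ⟨_, rfl⟩
    set l : ℕ → ℝ := fun j => max (fseq n (past Y (t - 1 - (j : ℤ)) ω)) (r ^ n) with hl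
    have hlpos : ∀ j, 0 < l j := fun j => lt_of_lt_of_le (pow_pos hr0 n) (le_max_right _ _)
    set l' : ℕ → ℝ := fun j => lam (t - 1 - (j : ℤ)) ω with hl'
    have hl'pos : ∀ j, 0 < l' j := fun j => hpos _
    have hFl : fseq (n + 1) (past Y t ω) = F l (past Y t ω) := by
      rw [hfS]
      show F _ (past Y t ω) = F l (past Y t ω)
      congr 1
      funext j
      congr 2
      funext i
      show (Y (t - 1 - ((j + 1 + i : ℕ) : ℤ)) ω : ℝ) = (Y ((t - 1 - (j : ℤ)) - 1 - (i : ℤ)) ω : ℝ)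
      have : t - 1 - ((j + 1 + i : ℕ) : ℤ) = (t - 1 - (j : ℤ)) - 1 - (i : ℤ) := by
        push_cast; ring
      rw [this]
    have hlam : lam t ω = F l' (past Y t ω) := hω
    calc ENNReal.ofReal (e (n + 1) t ω)
        = ENNReal.ofReal |F l (past Y t ω) - F l' (past Y t ω)| := by
          show ENNReal.ofReal |lam t ω - fseq (n + 1) (past Y t ω)| = _
          rw [hFl, hlam, abs_sub_comm]
      _ ≤ ∑' j, ENNReal.ofReal (α j * (|l j - l' j| + |past Y t ω j - past Y t ω j|)) :=
          hF_lip l l' _ _ hlpos hl'pos hy hy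
      _ ≤ ∑' j, ENNReal.ofReal (α j * (e n (t - 1 - (j : ℤ)) ω + r ^ n)) := by
          refine ENNReal.tsum_le_tsum fun j => ENNReal.ofReal_le_ofReal ?_
          rw [sub_self, abs_zero, add_zero]
          refine mul_le_mul_of_nonneg_left ?_ (hα_nonneg j)
          set a : ℝ := fseq n (past Y (t - 1 - (j : ℤ)) ω) with ha
          have ha0 : 0 ≤ a := hfseq_nonneg _ _
          have h1 : |l j - a| ≤ r ^ n := by
            show |max a (r ^ n) - a| ≤ r ^ n
            rw [abs_of_nonneg (by simp only [sub_nonneg]; exact le_max_left _ _)]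
            have : max a (r ^ n) ≤ a + r ^ n :=
              max_le (le_add_of_nonneg_right (pow_nonneg hr0.le n)) (le_add_of_nonneg_left ha0)
            linarith
          have h2 : |a - l' j| = e n (t - 1 - (j : ℤ)) ω := by
            rw [abs_sub_comm]
          calc |l j - l' j| ≤ |l j - a| + |a - l' j| := abs_sub_le _ _ _
            _ ≤ e n (t - 1 - (j : ℤ)) ω + r ^ n := by rw [h2]; linarith
  -- integrated recursion
  set A : ℕ → ENNReal := fun n => ∫⁻ ω, ENNReal.ofReal (e n 0 ω) ∂P with hA
  have hrecA : ∀ n, A (n + 1) ≤ ENNReal.ofReal κ * (A n + ENNReal.ofReal (r ^ n)) := by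
    intro n
    calc A (n + 1)
        ≤ ∫⁻ ω, ∑' j : ℕ, ENNReal.ofReal (α j * (e n (0 - 1 - (j : ℤ)) ω + r ^ n)) ∂P :=
          lintegral_mono_ae (hstep n 0)
      _ = ∑' j : ℕ, ∫⁻ ω, ENNReal.ofReal (α j * (e n (0 - 1 - (j : ℤ)) ω + r ^ n)) ∂P :=
          lintegral_tsum fun j =>
            ((((hemeas n _).add_const _).const_mul _).ennreal_ofReal).aemeasurable
      _ = ∑' j : ℕ, ENNReal.ofReal (α j) * (A n + ENNReal.ofReal (r ^ n)) := by
          refine tsum_congr fun j => ?_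
          have hpt : ∀ ω, ENNReal.ofReal (α j * (e n (0 - 1 - (j : ℤ)) ω + r ^ n)) =
              ENNReal.ofReal (α j) *
                (ENNReal.ofReal (e n (0 - 1 - (j : ℤ)) ω) + ENNReal.ofReal (r ^ n)) := by
            intro ω
            rw [ENNReal.ofReal_mul (hα_nonneg j),
              ENNReal.ofReal_add (abs_nonneg _) (pow_nonneg hr0.le n)]
          simp_rw [hpt]
          rw [lintegral_const_mul (f := fun ω => ENNReal.ofReal (e n (0 - 1 - (j : ℤ)) ω) + ENNReal.ofReal (r ^ n)) _ ((hemeas n (0 - 1 - (j : ℤ))).ennreal_ofReal.add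
            measurable_const), lintegral_add_right _ measurable_const, lintegral_const,
            measure_univ, mul_one, hEconst n (0 - 1 - (j : ℤ))]
      _ = ENNReal.ofReal κ * (A n + ENNReal.ofReal (r ^ n)) := by
          rw [ENNReal.tsum_mul_right, ← ENNReal.ofReal_tsum_of_nonneg hα_nonneg hα_sum]
  -- A 0 is finite
  have hA0 : A 0 ≠ ⊤ := by
    have hint : Integrable (lam 0) P := by
      have := hlammom 1 le_rfl
      simpa using this
    have heq : A 0 = ∫⁻ ω, (‖lam 0 ω‖₊ : ENNReal) ∂P := by
      refine lintegral_congr fun ω => ?_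
      show ENNReal.ofReal |lam 0 ω - fseq 0 (past Y 0 ω)| = _
      rw [hf0, sub_zero, ← Real.norm_eq_abs, ofReal_norm, enorm_eq_nnnorm]
    rw [heq]
    exact hint.2.ne
  -- geometric decay
  set C : ℝ := (A 0).toReal + 1 / (r - κ) with hC
  have hrκnn : 0 ≤ 1 / (r - κ) := one_div_nonneg.2 (by linarith)
  have hC0 : 0 ≤ C := by
    have h2 := ENNReal.toReal_nonneg (a := A 0)
    rw [hC]; linarith
  have hAn : ∀ n, A n ≤ ENNReal.ofReal (C * r ^ n) := by
    intro n
    induction n with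
    | zero =>
      rw [pow_zero, mul_one]
      calc A 0 = ENNReal.ofReal (A 0).toReal := (ENNReal.ofReal_toReal hA0).symm
        _ ≤ ENNReal.ofReal C := ENNReal.ofReal_le_ofReal
            (le_add_of_nonneg_right hrκnn)
    | succ n ih =>
      calc A (n + 1) ≤ ENNReal.ofReal κ * (A n + ENNReal.ofReal (r ^ n)) := hrecA n
        _ ≤ ENNReal.ofReal κ * (ENNReal.ofReal (C * r ^ n) + ENNReal.ofReal (r ^ n)) := by
            exact mul_le_mul_right (add_le_add_left ih _) _
        _ = ENNReal.ofReal (κ * (C * r ^ n + r ^ n)) := by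
            rw [← ENNReal.ofReal_add (by positivity) (by positivity),
              ← ENNReal.ofReal_mul hκ0]
        _ ≤ ENNReal.ofReal (C * r ^ (n + 1)) := by
            refine ENNReal.ofReal_le_ofReal ?_
            have hrn : (0:ℝ) ≤ r ^ n := by positivity
            have hkey : κ * (C + 1) ≤ C * r := by
              have hne : r - κ ≠ 0 := by linarith
              have h1 : 1 / (r - κ) * (r - κ) = 1 := one_div_mul_cancel hne
              have h2 : 0 ≤ (A 0).toReal * (r - κ) :=
                mul_nonneg ENNReal.toReal_nonneg (by linarith)
              rw [hC]
              nlinarith [hα_lt1, hκr, h1, h2]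
            calc κ * (C * r ^ n + r ^ n) = (κ * (C + 1)) * r ^ n := by ring
              _ ≤ (C * r) * r ^ n := mul_le_mul_of_nonneg_right hkey hrn
              _ = C * r ^ (n + 1) := by ring
  have hAsum : ∑' n, A n ≠ ⊤ := by
    have hle : ∀ n, A n ≤ ENNReal.ofReal C * (ENNReal.ofReal r) ^ n := by
      intro n
      refine (hAn n).trans_eq ?_
      rw [← ENNReal.ofReal_pow hr0.le, ← ENNReal.ofReal_mul hC0]
    refine ne_of_lt (lt_of_le_of_lt (ENNReal.tsum_le_tsum hle) ?_)
    rw [ENNReal.tsum_mul_left, ENNReal.tsum_geometric]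
    refine ENNReal.mul_lt_top ENNReal.ofReal_lt_top ?_
    rw [lt_top_iff_ne_top]
    refine ENNReal.inv_ne_top.2 ?_
    have : ENNReal.ofReal r < 1 := by
      rw [← ENNReal.ofReal_one]
      exact ENNReal.ofReal_lt_ofReal_iff_of_nonneg hr0.le |>.2 hr1
    exact (tsub_pos_of_lt this).ne'
  -- define the limit function
  refine ⟨fun y => (Filter.liminf (fun n => ENNReal.ofReal (fseq n y)) Filter.atTop).toReal,
    ?_, fun y _ => ENNReal.toReal_nonneg, ?_⟩
  · exact (Measurable.liminf fun n => ENNReal.measurable_ofReal.comp (hfseq_meas n)).ennreal_toReal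
  intro t
  have hsummable_ae : ∀ᵐ ω ∂P, ∑' n, ENNReal.ofReal (e n t ω) ≠ ⊤ := by
    have hmeas : Measurable fun ω => ∑' n, ENNReal.ofReal (e n t ω) :=
      Measurable.ennreal_tsum fun n => ENNReal.measurable_ofReal.comp (hemeas n t)
    have hfin : ∫⁻ ω, ∑' n, ENNReal.ofReal (e n t ω) ∂P ≠ ⊤ := by
      rw [lintegral_tsum fun n => ((hemeas n t).ennreal_ofReal).aemeasurable]
      have hcg : ∀ n, (∫⁻ ω, ENNReal.ofReal (e n t ω) ∂P) = A n := fun n => hEconst n t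
      rw [tsum_congr hcg]
      exact hAsum
    filter_upwards [ae_lt_top hmeas hfin] with ω h using h.ne
  filter_upwards [hsummable_ae, hlam_pos t] with ω hω hpos
  have hsum : Summable fun n => e n t ω := by
    have hs := ENNReal.summable_toReal hω
    exact hs.congr fun n => ENNReal.toReal_ofReal (abs_nonneg _)
  have htend0 : Filter.Tendsto (fun n => e n t ω) Filter.atTop (nhds 0) :=
    hsum.tendsto_atTop_zero
  have htend : Filter.Tendsto (fun n => fseq n (past Y t ω)) Filter.atTop (nhds (lam t ω)) := by
    rw [tendsto_iff_dist_tendsto_zero]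
    have hdist : (fun n => dist (fseq n (past Y t ω)) (lam t ω)) = fun n => e n t ω :=
      funext fun n => by rw [Real.dist_eq, abs_sub_comm]
    rw [hdist]
    exact htend0
  have htend' : Filter.Tendsto (fun n => ENNReal.ofReal (fseq n (past Y t ω)))
      Filter.atTop (nhds (ENNReal.ofReal (lam t ω))) :=
    (ENNReal.continuous_ofReal.tendsto _).comp htend
  show lam t ω = _
  rw [htend'.liminf_eq, ENNReal.toReal_ofReal hpos.le]
end
end

section
/- Let (X_t)_{t≥1} be integrable real random variables on a common probability space such that ∑_{t=1}^∞ E[|X_t|]/t < ∞. Then (1/n) ∑_{t=1}^n X_t → 0 almost surely as n → ∞. -/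
open MeasureTheory Filter Topology

/-- Kronecker's lemma (special case): if `∑ x_t` converges then
`(1/n) ∑_{t<n} (t+1) x_t → 0`. -/
lemma kronecker {x : ℕ → ℝ} (hx : Summable x) :
    Tendsto (fun n : ℕ => (1 / (n : ℝ)) * ∑ t ∈ Finset.range n, ((t : ℝ) + 1) * x t)
      atTop (𝓝 0) := by
  set S : ℕ → ℝ := fun n => ∑ t ∈ Finset.range n, x t with hSdef
  have hS : Tendsto S atTop (𝓝 (∑' t, x t)) := hx.hasSum.tendsto_sum_nat
  have habel : ∀ n : ℕ,
      ∑ t ∈ Finset.range n, ((t : ℝ) + 1) * x t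
        = (n : ℝ) * S n - ∑ t ∈ Finset.range n, S t := by
    intro n
    induction n with
    | zero => simp [hSdef]
    | succ n ih =>
      rw [Finset.sum_range_succ, ih, Finset.sum_range_succ]
      have : S (n + 1) = S n + x n := by
        simp [hSdef, Finset.sum_range_succ]
      rw [this]
      push_cast
      ring
  have heq : ∀ n : ℕ,
      (1 / (n : ℝ)) * ∑ t ∈ Finset.range n, ((t : ℝ) + 1) * x t
        = S n - (n : ℝ)⁻¹ * ∑ t ∈ Finset.range n, S t := by
    intro n
    rcases Nat.eq_zero_or_pos n with h0 | hpos
    · subst h0; simp [hSdef]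
    · have hne : (n : ℝ) ≠ 0 := Nat.cast_ne_zero.mpr hpos.ne'
      rw [habel n]
      field_simp
  have hces : Tendsto (fun n : ℕ => (n : ℝ)⁻¹ * ∑ t ∈ Finset.range n, S t)
      atTop (𝓝 (∑' t, x t)) := hS.cesaro
  have := hS.sub hces
  rw [sub_self] at this
  exact Tendsto.congr (fun n => (heq n).symm) this

/-- **Kounias–Weng strong law of large numbers** (Corollary 1, 1969): if `(X_t)_{t≥1}`
(here `X t = X_{t+1}`) are integrable and `∑_{t≥1} E[|X_t|]/t < ∞`, then
`(1/n) ∑_{t=1}^n X_t → 0` almost surely. No independence or stationarity is assumed. -/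
theorem kounias_weng_slln
    {Ω : Type} [MeasurableSpace Ω] (P : Measure Ω) [IsProbabilityMeasure P]
    (X : ℕ → Ω → ℝ) (hint : ∀ t, Integrable (X t) P)
    (hsum : Summable fun t : ℕ => (∫ ω, |X t ω| ∂P) / ((t : ℝ) + 1)) :
    ∀ᵐ ω ∂P, Tendsto
      (fun n : ℕ => (1 / (n : ℝ)) * ∑ t ∈ Finset.range n, X t ω) atTop (𝓝 0) := by
  set f : ℕ → Ω → ℝ := fun t ω => X t ω / ((t : ℝ) + 1) with hfdef
  have hfint : ∀ t, Integrable (f t) P := fun t => (hint t).div_const _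
  have hpos : ∀ t : ℕ, (0 : ℝ) < (t : ℝ) + 1 := fun t => by positivity
  have hnormint : ∀ t : ℕ, (∫ ω, ‖f t ω‖ ∂P) = (∫ ω, |X t ω| ∂P) / ((t : ℝ) + 1) := by
    intro t
    rw [← integral_div]
    congr 1
    funext ω
    rw [Real.norm_eq_abs, hfdef]
    simp [abs_div, abs_of_pos (hpos t)]
  have hsum' : Summable fun t : ℕ => ∫ ω, ‖f t ω‖ ∂P := by
    simpa only [hnormint] using hsum
  -- ∑' ∫⁻ ‖f t‖₊ < ∞
  have hlint : ∑' t : ℕ, ∫⁻ ω, ‖f t ω‖₊ ∂P ≠ ⊤ := by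
    have h1 : ∀ t : ℕ, ∫⁻ ω, ‖f t ω‖₊ ∂P = ENNReal.ofReal (∫ ω, ‖f t ω‖ ∂P) := fun t =>
      (ofReal_integral_norm_eq_lintegral_enorm (hfint t)).symm
    rw [funext h1, ← ENNReal.ofReal_tsum_of_nonneg
      (fun t => integral_nonneg fun ω => norm_nonneg _) hsum']
    exact ENNReal.ofReal_ne_top
  have hmeas : ∀ t : ℕ, AEMeasurable (fun ω => (‖f t ω‖₊ : ENNReal)) P := fun t =>
    (hfint t).aestronglyMeasurable.enorm
  have hae : ∀ᵐ ω ∂P, Summable fun t => f t ω := by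
    rw [← lintegral_tsum hmeas] at hlint
    refine (ae_lt_top' (AEMeasurable.ennreal_tsum hmeas) hlint).mono fun ω hω => ?_
    have : Summable fun t => (‖f t ω‖₊ : ℝ) := by
      rw [← ENNReal.tsum_coe_ne_top_iff_summable_coe]
      exact hω.ne
    exact this.of_norm
  filter_upwards [hae] with ω hω
  have hk := kronecker hω
  refine Tendsto.congr (fun n => ?_) hk
  congr 1
  refine Finset.sum_congr rfl fun t _ => ?_
  rw [hfdef]
  field_simp
end

section
/- Let q : (0,1) → (0,∞) be non-decreasing on a neighborhood of 0, non-increasing on a neighborhood of 1, and satisfy inf_{η < τ < 1−η} q(τ) > 0 for every 0 < η < 1/2. If there exists c > 0 such that I_{0,1}(q,c) = ∫₀¹ (t(1−t))^{−1} exp(−c·q(t)²/(t(1−t))) dt < ∞, then sup_{0 < τ < 1} τ(1−τ)/q(τ)² < ∞. -/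
open MeasureTheory Filter Topology

set_option maxHeartbeats 2000000

/-- **Property of the Csörgő–Horváth weight function** (used in the proof of Lemma 2):
if `q : (0,1) → (0,∞)` is non-decreasing near `0`, non-increasing near `1`, bounded away
from `0` on the middle, and `I_{0,1}(q,c) = ∫₀¹ (t(1−t))⁻¹ exp(−c q(t)²/(t(1−t))) dt < ∞`
for some `c > 0`, then `sup_{0<τ<1} τ(1−τ)/q(τ)² < ∞`. -/
theorem weight_function_bound
    (q : ℝ → ℝ) (hq_pos : ∀ t ∈ Set.Ioo (0 : ℝ) 1, 0 < q t)
    (hq_mono : ∃ ε > (0 : ℝ), MonotoneOn q (Set.Ioo 0 ε))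
    (hq_anti : ∃ ε > (0 : ℝ), AntitoneOn q (Set.Ioo (1 - ε) 1))
    (hq_inf : ∀ η : ℝ, 0 < η → η < 1 / 2 → 0 < sInf (q '' Set.Ioo η (1 - η)))
    (c : ℝ) (hc : 0 < c)
    (hI : IntegrableOn
      (fun t => (1 / (t * (1 - t))) * Real.exp (-c * q t ^ 2 / (t * (1 - t))))
      (Set.Ioo (0 : ℝ) 1)) :
    ∃ M : ℝ, ∀ τ ∈ Set.Ioo (0 : ℝ) 1, τ * (1 - τ) / q τ ^ 2 ≤ M := by
  obtain ⟨ε₁, hε₁, hmono⟩ := hq_mono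
  obtain ⟨ε₂, hε₂, hanti⟩ := hq_anti
  set f : ℝ → ℝ := fun t => (1 / (t * (1 - t))) * Real.exp (-c * q t ^ 2 / (t * (1 - t)))
    with hf
  -- nonnegativity of f on (0,1)
  have hfnn : ∀ s ∈ Set.Ioo (0 : ℝ) 1, 0 ≤ f s := by
    intro s hs
    have : 0 < s * (1 - s) := by nlinarith [hs.1, hs.2]
    rw [hf]
    positivity
  have hg : Integrable ((Set.Ioo (0 : ℝ) 1).indicator f) volume :=
    hI.integrable_indicator measurableSet_Ioo
  have hhalf : (0 : ℝ) < (1 / 2) * Real.exp (-1) := by positivity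
  -- tail near 0
  have htend0 : Tendsto (fun r : ℝ => volume (Set.Ioo (0 : ℝ) r)) (𝓝[>] (0 : ℝ)) (𝓝 0) := by
    have h1 : Tendsto (fun r : ℝ => r) (𝓝[>] (0 : ℝ)) (𝓝 0) :=
      tendsto_id.mono_left nhdsWithin_le_nhds
    have h2 := (ENNReal.continuous_ofReal.tendsto 0).comp h1
    simpa [Real.volume_Ioo, Function.comp_def] using h2
  have htendI0 :=
    hg.tendsto_setIntegral_nhds_zero (s := fun r : ℝ => Set.Ioo (0 : ℝ) r) htend0
  have hmem0 : Set.Ioo (0 : ℝ) (min ε₁ (1 / 2)) ∈ 𝓝[>] (0 : ℝ) :=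
    Ioo_mem_nhdsGT_of_mem ⟨le_rfl, lt_min hε₁ one_half_pos⟩
  obtain ⟨a, haI, ha0, ha1⟩ :
      ∃ a : ℝ, (∫ x in Set.Ioo (0 : ℝ) a, (Set.Ioo (0 : ℝ) 1).indicator f x)
        < (1 / 2) * Real.exp (-1) ∧ 0 < a ∧ a < min ε₁ (1 / 2) := by
    obtain ⟨a, h1, h2⟩ := ((htendI0.eventually_lt_const hhalf).and
      (eventually_of_mem hmem0 (fun x hx => hx))).exists
    exact ⟨a, h1, h2.1, h2.2⟩
  have haε : a < ε₁ := lt_of_lt_of_le ha1 (min_le_left _ _)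
  have hah : a < 1 / 2 := lt_of_lt_of_le ha1 (min_le_right _ _)
  have hsubI0 : Set.Ioo (0 : ℝ) a ⊆ Set.Ioo (0 : ℝ) 1 :=
    fun s hs => ⟨hs.1, lt_trans hs.2 (by linarith)⟩
  have haf : (∫ s in Set.Ioo (0 : ℝ) a, f s) < (1 / 2) * Real.exp (-1) := by
    have heq : (∫ s in Set.Ioo (0 : ℝ) a, f s)
        = ∫ s in Set.Ioo (0 : ℝ) a, (Set.Ioo (0 : ℝ) 1).indicator f s :=
      setIntegral_congr_fun measurableSet_Ioo
        (fun x hx => (Set.indicator_of_mem (hsubI0 hx) f).symm)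
    rw [heq]; exact haI
  -- tail near 1
  have htend1 : Tendsto (fun r : ℝ => volume (Set.Ioo (1 - r) (1 : ℝ))) (𝓝[>] (0 : ℝ)) (𝓝 0) := by
    have h1 : Tendsto (fun r : ℝ => r) (𝓝[>] (0 : ℝ)) (𝓝 0) :=
      tendsto_id.mono_left nhdsWithin_le_nhds
    have h2 := (ENNReal.continuous_ofReal.tendsto 0).comp h1
    simpa [Real.volume_Ioo, Function.comp_def] using h2
  have htendI1 :=
    hg.tendsto_setIntegral_nhds_zero (s := fun r : ℝ => Set.Ioo (1 - r) (1 : ℝ)) htend1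
  have hmem1 : Set.Ioo (0 : ℝ) (min ε₂ (1 / 2)) ∈ 𝓝[>] (0 : ℝ) :=
    Ioo_mem_nhdsGT_of_mem ⟨le_rfl, lt_min hε₂ one_half_pos⟩
  obtain ⟨b, hbI, hb0, hb1⟩ :
      ∃ b : ℝ, (∫ x in Set.Ioo (1 - b) (1 : ℝ), (Set.Ioo (0 : ℝ) 1).indicator f x)
        < (1 / 2) * Real.exp (-1) ∧ 0 < b ∧ b < min ε₂ (1 / 2) := by
    obtain ⟨b, h1, h2⟩ := ((htendI1.eventually_lt_const hhalf).and
      (eventually_of_mem hmem1 (fun x hx => hx))).exists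
    exact ⟨b, h1, h2.1, h2.2⟩
  have hbε : b < ε₂ := lt_of_lt_of_le hb1 (min_le_left _ _)
  have hbh : b < 1 / 2 := lt_of_lt_of_le hb1 (min_le_right _ _)
  have hsubI1 : Set.Ioo (1 - b) (1 : ℝ) ⊆ Set.Ioo (0 : ℝ) 1 :=
    fun s hs => ⟨lt_trans (by linarith) hs.1, hs.2⟩
  have hbf : (∫ s in Set.Ioo (1 - b) (1 : ℝ), f s) < (1 / 2) * Real.exp (-1) := by
    have heq : (∫ s in Set.Ioo (1 - b) (1 : ℝ), f s)
        = ∫ s in Set.Ioo (1 - b) (1 : ℝ), (Set.Ioo (0 : ℝ) 1).indicator f s :=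
      setIntegral_congr_fun measurableSet_Ioo
        (fun x hx => (Set.indicator_of_mem (hsubI1 hx) f).symm)
    rw [heq]; exact hbI
  -- the middle infimum
  set η : ℝ := min a b with hη
  have hη0 : 0 < η := lt_min ha0 hb0
  have hηh : η < 1 / 2 := lt_of_le_of_lt (min_le_left _ _) hah
  have hδ : 0 < sInf (q '' Set.Ioo (η / 2) (1 - η / 2)) :=
    hq_inf (η / 2) (by positivity) (by linarith)
  set δ : ℝ := sInf (q '' Set.Ioo (η / 2) (1 - η / 2)) with hδdef
  refine ⟨max (4 * c) ((1 / 4) / δ ^ 2), ?_⟩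
  intro τ hτ
  obtain ⟨hτ0, hτ1⟩ := hτ
  have hqτ : 0 < q τ := hq_pos τ ⟨hτ0, hτ1⟩
  by_cases hcase0 : τ < a
  · -- near 0
    have hτε : τ < ε₁ := lt_trans hcase0 haε
    have hτh : τ < 1 / 2 := lt_trans hcase0 hah
    have hsub1 : Set.Ioo (τ / 2) τ ⊆ Set.Ioo (0 : ℝ) a :=
      fun s hs => ⟨lt_trans (by linarith) hs.1, lt_trans hs.2 hcase0⟩
    have hconst : ∀ s ∈ Set.Ioo (τ / 2) τ,
        (1 / τ) * Real.exp (-(4 * c) * q τ ^ 2 / τ) ≤ f s := by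
      intro s hs
      obtain ⟨hs1, hs2⟩ := hs
      have hs0 : 0 < s := lt_trans (by linarith) hs1
      have hs1' : s < 1 := by linarith
      have hd0 : 0 < s * (1 - s) := by nlinarith
      have hdle : s * (1 - s) ≤ τ := by nlinarith
      have hqs : 0 < q s := hq_pos s ⟨hs0, hs1'⟩
      have hmle : q s ≤ q τ := hmono ⟨hs0, by linarith⟩ ⟨hτ0, hτε⟩ hs2.le
      have hq2 : q s ^ 2 ≤ q τ ^ 2 := pow_le_pow_left₀ hqs.le hmle 2
      have hdge : τ / 4 ≤ s * (1 - s) := by nlinarith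
      have hE : c * q s ^ 2 / (s * (1 - s)) ≤ 4 * c * q τ ^ 2 / τ := by
        have h4 : c * q s ^ 2 / (s * (1 - s)) ≤ c * q τ ^ 2 / (τ / 4) :=
          div_le_div₀ (by positivity) (mul_le_mul_of_nonneg_left hq2 hc.le)
            (by positivity) hdge
        have h5 : c * q τ ^ 2 / (τ / 4) = 4 * c * q τ ^ 2 / τ := by
          field_simp
        linarith
      have hexp : Real.exp (-(4 * c) * q τ ^ 2 / τ)
          ≤ Real.exp (-c * q s ^ 2 / (s * (1 - s))) := by
        apply Real.exp_le_exp.2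
        rw [neg_mul, neg_mul, neg_div, neg_div]
        linarith
      have h1d : (1 : ℝ) / τ ≤ 1 / (s * (1 - s)) :=
        one_div_le_one_div_of_le hd0 hdle
      calc (1 / τ) * Real.exp (-(4 * c) * q τ ^ 2 / τ)
          ≤ (1 / (s * (1 - s))) * Real.exp (-c * q s ^ 2 / (s * (1 - s))) :=
            mul_le_mul h1d hexp (Real.exp_pos _).le (by positivity)
        _ = f s := rfl
    have hIτ : IntegrableOn f (Set.Ioo (τ / 2) τ) volume :=
      hI.mono_set (hsub1.trans hsubI0)
    have hlow := setIntegral_ge_of_const_le (μ := volume) measurableSet_Ioo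
      (by rw [Real.volume_Ioo]; exact ENNReal.ofReal_ne_top) hconst hIτ
    have hvol : (volume (Set.Ioo (τ / 2) τ)).toReal = τ / 2 := by
      rw [Real.volume_Ioo, ENNReal.toReal_ofReal (by linarith)]
      ring
    rw [measureReal_def, hvol, smul_eq_mul, mul_comm (τ / 2)] at hlow
    have hup : (∫ s in Set.Ioo (τ / 2) τ, f s) ≤ ∫ s in Set.Ioo (0 : ℝ) a, f s := by
      apply setIntegral_mono_set (hI.mono_set hsubI0)
      · exact (ae_restrict_iff' measurableSet_Ioo).2
          (Filter.Eventually.of_forall (fun x hx => hfnn x (hsubI0 hx)))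
      · exact Filter.Eventually.of_forall hsub1
    have hchain : (1 / 2 : ℝ) * Real.exp (-(4 * c) * q τ ^ 2 / τ)
        < (1 / 2) * Real.exp (-1) := by
      have heqL : (1 / τ) * Real.exp (-(4 * c) * q τ ^ 2 / τ) * (τ / 2)
          = (1 / 2 : ℝ) * Real.exp (-(4 * c) * q τ ^ 2 / τ) := by
        field_simp
      calc (1 / 2 : ℝ) * Real.exp (-(4 * c) * q τ ^ 2 / τ)
          = (1 / τ) * Real.exp (-(4 * c) * q τ ^ 2 / τ) * (τ / 2) := heqL.symm
        _ ≤ ∫ s in Set.Ioo (τ / 2) τ, f s := hlow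
        _ ≤ ∫ s in Set.Ioo (0 : ℝ) a, f s := hup
        _ < (1 / 2) * Real.exp (-1) := haf
    have hexplt : Real.exp (-(4 * c) * q τ ^ 2 / τ) < Real.exp (-1) := by linarith
    have hElt : -(4 * c) * q τ ^ 2 / τ < -1 := Real.exp_lt_exp.1 hexplt
    have hdiv : 1 < 4 * c * q τ ^ 2 / τ := by
      rw [neg_mul, neg_div] at hElt
      linarith
    have hτlt : τ < 4 * c * q τ ^ 2 := by
      have := (lt_div_iff₀ hτ0).1 hdiv
      linarith
    have hfin : τ * (1 - τ) / q τ ^ 2 ≤ 4 * c := by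
      rw [div_le_iff₀ (by positivity)]
      nlinarith
    exact le_trans hfin (le_max_left _ _)
  · by_cases hcase1 : 1 - b < τ
    · -- near 1
      have hτε : 1 - ε₂ < τ := by linarith
      have hτh : 1 / 2 < τ := by linarith
      have hsub1 : Set.Ioo τ ((1 + τ) / 2) ⊆ Set.Ioo (1 - b) (1 : ℝ) :=
        fun s hs => ⟨lt_trans hcase1 hs.1, by linarith [hs.2]⟩
      have hconst : ∀ s ∈ Set.Ioo τ ((1 + τ) / 2),
          (1 / (1 - τ)) * Real.exp (-(4 * c) * q τ ^ 2 / (1 - τ)) ≤ f s := by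
        intro s hs
        obtain ⟨hs1, hs2⟩ := hs
        have hs0 : 0 < s := by linarith
        have hs1' : s < 1 := by linarith
        have hd0 : 0 < s * (1 - s) := by nlinarith
        have hdle : s * (1 - s) ≤ 1 - τ := by nlinarith
        have hqs : 0 < q s := hq_pos s ⟨hs0, hs1'⟩
        have hmle : q s ≤ q τ := hanti ⟨hτε, hτ1⟩ ⟨by linarith, hs1'⟩ hs1.le
        have hq2 : q s ^ 2 ≤ q τ ^ 2 := pow_le_pow_left₀ hqs.le hmle 2
        have hdge : (1 - τ) / 4 ≤ s * (1 - s) := by nlinarith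
        have hE : c * q s ^ 2 / (s * (1 - s)) ≤ 4 * c * q τ ^ 2 / (1 - τ) := by
          have h4 : c * q s ^ 2 / (s * (1 - s)) ≤ c * q τ ^ 2 / ((1 - τ) / 4) :=
            div_le_div₀ (by positivity) (mul_le_mul_of_nonneg_left hq2 hc.le)
              (by linarith) hdge
          have h5 : c * q τ ^ 2 / ((1 - τ) / 4) = 4 * c * q τ ^ 2 / (1 - τ) := by
            have : (1 : ℝ) - τ ≠ 0 := by linarith
            field_simp
          linarith
        have hexp : Real.exp (-(4 * c) * q τ ^ 2 / (1 - τ))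
            ≤ Real.exp (-c * q s ^ 2 / (s * (1 - s))) := by
          apply Real.exp_le_exp.2
          rw [neg_mul, neg_mul, neg_div, neg_div]
          linarith
        have h1d : (1 : ℝ) / (1 - τ) ≤ 1 / (s * (1 - s)) :=
          one_div_le_one_div_of_le hd0 hdle
        calc (1 / (1 - τ)) * Real.exp (-(4 * c) * q τ ^ 2 / (1 - τ))
            ≤ (1 / (s * (1 - s))) * Real.exp (-c * q s ^ 2 / (s * (1 - s))) :=
              mul_le_mul h1d hexp (Real.exp_pos _).le (by positivity)
          _ = f s := rfl
      have hIτ : IntegrableOn f (Set.Ioo τ ((1 + τ) / 2)) volume :=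
        hI.mono_set (hsub1.trans hsubI1)
      have hlow := setIntegral_ge_of_const_le (μ := volume) measurableSet_Ioo
        (by rw [Real.volume_Ioo]; exact ENNReal.ofReal_ne_top) hconst hIτ
      have hvol : (volume (Set.Ioo τ ((1 + τ) / 2))).toReal = (1 - τ) / 2 := by
        rw [Real.volume_Ioo, ENNReal.toReal_ofReal (by linarith)]
        ring
      rw [measureReal_def, hvol, smul_eq_mul, mul_comm ((1 - τ) / 2)] at hlow
      have hup : (∫ s in Set.Ioo τ ((1 + τ) / 2), f s)
          ≤ ∫ s in Set.Ioo (1 - b) (1 : ℝ), f s := by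
        apply setIntegral_mono_set (hI.mono_set hsubI1)
        · exact (ae_restrict_iff' measurableSet_Ioo).2
            (Filter.Eventually.of_forall (fun x hx => hfnn x (hsubI1 hx)))
        · exact Filter.Eventually.of_forall hsub1
      have hchain : (1 / 2 : ℝ) * Real.exp (-(4 * c) * q τ ^ 2 / (1 - τ))
          < (1 / 2) * Real.exp (-1) := by
        have h1τ : (1 : ℝ) - τ ≠ 0 := by linarith
        have heqL : (1 / (1 - τ)) * Real.exp (-(4 * c) * q τ ^ 2 / (1 - τ)) * ((1 - τ) / 2)
            = (1 / 2 : ℝ) * Real.exp (-(4 * c) * q τ ^ 2 / (1 - τ)) := by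
          field_simp
        calc (1 / 2 : ℝ) * Real.exp (-(4 * c) * q τ ^ 2 / (1 - τ))
            = (1 / (1 - τ)) * Real.exp (-(4 * c) * q τ ^ 2 / (1 - τ)) * ((1 - τ) / 2) :=
              heqL.symm
          _ ≤ ∫ s in Set.Ioo τ ((1 + τ) / 2), f s := hlow
          _ ≤ ∫ s in Set.Ioo (1 - b) (1 : ℝ), f s := hup
          _ < (1 / 2) * Real.exp (-1) := hbf
      have hexplt : Real.exp (-(4 * c) * q τ ^ 2 / (1 - τ)) < Real.exp (-1) := by linarith
      have hElt : -(4 * c) * q τ ^ 2 / (1 - τ) < -1 := Real.exp_lt_exp.1 hexplt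
      have hdiv : 1 < 4 * c * q τ ^ 2 / (1 - τ) := by
        rw [neg_mul, neg_div] at hElt
        linarith
      have hτlt : 1 - τ < 4 * c * q τ ^ 2 := by
        have := (lt_div_iff₀ (by linarith : (0 : ℝ) < 1 - τ)).1 hdiv
        linarith
      have hfin : τ * (1 - τ) / q τ ^ 2 ≤ 4 * c := by
        rw [div_le_iff₀ (by positivity)]
        nlinarith
      exact le_trans hfin (le_max_left _ _)
    · -- middle
      push_neg at hcase0 hcase1
      have hτa : a ≤ τ := hcase0
      have hτb : τ ≤ 1 - b := hcase1
      have hmemδ : τ ∈ Set.Ioo (η / 2) (1 - η / 2) := by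
        constructor
        · have : η ≤ a := min_le_left _ _
          linarith
        · have : η ≤ b := min_le_right _ _
          linarith
      have hbdd : BddBelow (q '' Set.Ioo (η / 2) (1 - η / 2)) := by
        refine ⟨0, ?_⟩
        rintro y ⟨x, hx, rfl⟩
        have hx1 : x ∈ Set.Ioo (0 : ℝ) 1 := ⟨by linarith [hx.1], by linarith [hx.2]⟩
        exact (hq_pos x hx1).le
      have hδle : δ ≤ q τ := csInf_le hbdd ⟨τ, hmemδ, rfl⟩
      have hδ2 : δ ^ 2 ≤ q τ ^ 2 := by nlinarith
      have hnum : τ * (1 - τ) ≤ 1 / 4 := by nlinarith [sq_nonneg (τ - 1 / 2)]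
      have hfin : τ * (1 - τ) / q τ ^ 2 ≤ (1 / 4) / δ ^ 2 :=
        div_le_div₀ (by norm_num) hnum (by positivity) hδ2
      exact le_trans hfin (le_max_right _ _)
end

section
/- Let p ≥ 1 be an integer, α_1, …, α_p ≥ 0 with α = ∑_{j=1}^p α_j < 1, and let (v_q)_{q≥0} be nonnegative reals satisfying v_q ≤ ∑_{j=1}^p α_j v_{q−j} for every q ≥ p. Then, setting V = max_{0 ≤ i < p} v_i, one has v_q ≤ α^{⌊q/p⌋} · V for every q ≥ 0; in particular v_q → 0 as q → ∞. -/
open Filter Topology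

/-- **Contraction recursion** (Lemma 5.4 of Doukhan–Wintenberger 2008, used in the proof
of Proposition 1): if `v_q ≤ ∑_{j=1}^p α_j v_{q−j}` for all `q ≥ p`, with `α_j ≥ 0` and
`α = ∑_{j=1}^p α_j < 1`, then `v_q ≤ α^{⌊q/p⌋}·max_{0≤i<p} v_i` for all `q`; in
particular `v_q → 0`. -/
theorem contraction_recursion
    (p : ℕ) (hp : 1 ≤ p)
    (α : ℕ → ℝ) (hα : ∀ j, 0 ≤ α j)
    (hα_lt1 : ∑ j ∈ Finset.Icc 1 p, α j < 1)
    (v : ℕ → ℝ) (hv : ∀ q, 0 ≤ v q)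
    (hrec : ∀ q, p ≤ q → v q ≤ ∑ j ∈ Finset.Icc 1 p, α j * v (q - j)) :
    (∀ q : ℕ, v q ≤ (∑ j ∈ Finset.Icc 1 p, α j) ^ (q / p) *
      ((Finset.range p).sup' (Finset.nonempty_range_iff.mpr (by omega)) v)) ∧
    Tendsto v atTop (𝓝 0) := by
  set A := ∑ j ∈ Finset.Icc 1 p, α j with hA
  have hA0 : 0 ≤ A := Finset.sum_nonneg fun j _ => hα j
  set V := (Finset.range p).sup' (Finset.nonempty_range_iff.mpr (by omega)) v with hV
  have hV0 : 0 ≤ V := le_trans (hv 0) (Finset.le_sup' v (Finset.mem_range.mpr (by omega)))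
  have key : ∀ q : ℕ, v q ≤ A ^ (q / p) * V := by
    intro q
    induction q using Nat.strong_induction_on with
    | _ q ih =>
      by_cases hq : q < p
      · have : v q ≤ V := Finset.le_sup' v (Finset.mem_range.mpr hq)
        simpa [Nat.div_eq_of_lt hq] using this
      · push_neg at hq
        calc v q ≤ ∑ j ∈ Finset.Icc 1 p, α j * v (q - j) := hrec q hq
          _ ≤ ∑ j ∈ Finset.Icc 1 p, α j * (A ^ (q / p - 1) * V) := by
              apply Finset.sum_le_sum
              intro j hj
              have hj' := Finset.mem_Icc.mp hj
              have hlt : q - j < q := by omega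
              have hle : q / p - 1 ≤ (q - j) / p := by
                have h2 : q - p ≤ q - j := by omega
                have heq : (q - p) / p + 1 = q / p := by
                  rw [← Nat.add_div_right _ (by omega : 0 < p), Nat.sub_add_cancel hq]
                calc q / p - 1 = (q - p) / p := by rw [← heq, Nat.add_sub_cancel]
                  _ ≤ (q - j) / p := Nat.div_le_div_right h2
              have hpow : A ^ ((q - j) / p) ≤ A ^ (q / p - 1) :=
                pow_le_pow_of_le_one hA0 (le_of_lt hα_lt1) hle
              have h3 := ih (q - j) hlt
              have h4 : v (q - j) ≤ A ^ (q / p - 1) * V :=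
                h3.trans (mul_le_mul_of_nonneg_right hpow hV0)
              exact mul_le_mul_of_nonneg_left h4 (hα j)
          _ = A * (A ^ (q / p - 1) * V) := by rw [← Finset.sum_mul]
          _ = A ^ (q / p) * V := by
              rw [← mul_assoc, ← pow_succ']
              congr 2
              have h1 : 1 ≤ q / p := Nat.one_le_div_iff (by omega) |>.mpr hq
              omega
  refine ⟨key, ?_⟩
  have hdiv : Tendsto (fun q : ℕ => q / p) atTop atTop := by
    apply tendsto_atTop_atTop.mpr
    intro b
    exact ⟨b * p, fun a ha => (Nat.le_div_iff_mul_le (by omega)).mpr ha⟩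
  have hlim : Tendsto (fun q : ℕ => A ^ (q / p) * V) atTop (𝓝 0) := by
    have := (tendsto_pow_atTop_nhds_zero_of_lt_one hA0 hα_lt1).comp hdiv
    simpa using this.mul_const V
  exact squeeze_zero hv key hlim
end

section
/- Assume D(Θ) and A_0(Θ) hold with ∑_{j≥1} (log j)·α_j^{(0)} < ∞ and let Y be a stationary ergodic solution of model (3) with parameter θ₀ ∈ Θ. Then (1/n)·sup_{θ∈Θ} |∑_{t=1}^n ℓ_t(θ) − ∑_{t=1}^n ℓ̂_t(θ)| → 0 almost surely as n → ∞. -/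
open MeasureTheory ProbabilityTheory Filter Topology Matrix

noncomputable section

/-- Exact log-likelihood term `ℓ_t(θ) = Y_t log f_θ^t − f_θ^t` (using the infinite past). -/
def lexact {Ω : Type} {d : ℕ} (f : (Fin d → ℝ) → (ℕ → ℝ) → ℝ) (Y : ℤ → Ω → ℕ)
    (θ : Fin d → ℝ) (t : ℤ) (ω : Ω) : ℝ :=
  (Y t ω : ℝ) * Real.log (f θ (past Y t ω)) - f θ (past Y t ω)

section AuxLemmas

open Finset

private lemma log_lip_aux' {c a b : ℝ} (hc : 0 < c) (ha : c ≤ a) (hab : a ≤ b) :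
    Real.log b - Real.log a ≤ (b - a) / c := by
  have ha0 : 0 < a := lt_of_lt_of_le hc ha
  have hb0 : 0 < b := lt_of_lt_of_le ha0 hab
  have h1 : Real.log b - Real.log a = Real.log (b / a) := (Real.log_div hb0.ne' ha0.ne').symm
  have h2 : Real.log (b / a) ≤ b / a - 1 := Real.log_le_sub_one_of_pos (by positivity)
  have h3 : b / a - 1 = (b - a) / a := by field_simp
  have h4 : (b - a) / a ≤ (b - a) / c :=
    div_le_div_of_nonneg_left (by linarith) hc ha
  linarith

private lemma log_lip' {c a b : ℝ} (hc : 0 < c) (ha : c ≤ a) (hb : c ≤ b) :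
    |Real.log a - Real.log b| ≤ |a - b| / c := by
  have ha0 : 0 < a := lt_of_lt_of_le hc ha
  have hb0 : 0 < b := lt_of_lt_of_le hc hb
  rcases le_total a b with h | h
  · have hlog : Real.log a ≤ Real.log b := Real.log_le_log ha0 h
    have h1 : |Real.log a - Real.log b| = Real.log b - Real.log a := by
      rw [abs_sub_comm]; exact abs_of_nonneg (by linarith)
    have h2 : |a - b| = b - a := by rw [abs_sub_comm]; exact abs_of_nonneg (by linarith)
    rw [h1, h2]; exact log_lip_aux' hc ha h
  · have hlog : Real.log b ≤ Real.log a := Real.log_le_log hb0 h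
    have h1 : |Real.log a - Real.log b| = Real.log a - Real.log b :=
      abs_of_nonneg (by linarith)
    have h2 : |a - b| = a - b := abs_of_nonneg (by linarith)
    rw [h1, h2]; exact log_lip_aux' hc hb h

private lemma harmonic_bound' (j : ℕ) :
    ∑ t ∈ Finset.range (j+1), (1:ℝ)/(t+1) ≤ 1 + Real.log (j+1) := by
  induction j with
  | zero => simp
  | succ j ih =>
    rw [Finset.sum_range_succ]
    have key : Real.log ((j:ℝ)+1) + 1/((j:ℝ)+1+1) ≤ Real.log ((j:ℝ)+1+1) := by
      have h1 : Real.log (((j:ℝ)+1)/((j:ℝ)+1+1)) ≤ ((j:ℝ)+1)/((j:ℝ)+1+1) - 1 :=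
        Real.log_le_sub_one_of_pos (by positivity)
      have h2 : Real.log (((j:ℝ)+1)/((j:ℝ)+1+1))
          = Real.log ((j:ℝ)+1) - Real.log ((j:ℝ)+1+1) :=
        Real.log_div (by positivity) (by positivity)
      have h3 : ((j:ℝ)+1)/((j:ℝ)+1+1) - 1 = -(1/((j:ℝ)+1+1)) := by
        field_simp
        ring
      rw [h2, h3] at h1; linarith
    push_cast
    push_cast at ih
    linarith

private lemma kronecker_nonneg' (a : ℕ → ℝ) (ha : ∀ k, 0 ≤ a k)
    (h : Summable fun k => a k / (k+1)) :
    Tendsto (fun n : ℕ => (1/(n:ℝ)) * ∑ k ∈ Finset.range n, a k) atTop (𝓝 0) := by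
  set g : ℕ → ℝ := fun k => a k / (k+1) with hg
  have hg0 : ∀ k, 0 ≤ g k := fun k => div_nonneg (ha k) (by positivity)
  rw [Metric.tendsto_atTop]
  intro ε hε
  have htail := tendsto_sum_nat_add g
  rw [Metric.tendsto_atTop] at htail
  obtain ⟨m, hm⟩ := htail (ε/2) (by linarith)
  have hm' : ∑' k, g (k + m) < ε/2 := by
    have := hm m le_rfl
    rw [Real.dist_eq, sub_zero, abs_of_nonneg (tsum_nonneg fun k => hg0 _)] at this
    exact this
  set C := ∑ k ∈ Finset.range m, a k with hC
  have hC0 : 0 ≤ C := Finset.sum_nonneg fun k _ => ha k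
  have hCn : Tendsto (fun n : ℕ => C * (1/(n:ℝ))) atTop (𝓝 0) := by
    simpa using tendsto_const_nhds.mul (tendsto_one_div_atTop_nhds_zero_nat (𝕜 := ℝ))
  rw [Metric.tendsto_atTop] at hCn
  obtain ⟨N₁, hN₁⟩ := hCn (ε/2) (by linarith)
  refine ⟨max m (max N₁ 1), fun n hn => ?_⟩
  have hnm : m ≤ n := le_trans (le_max_left _ _) hn
  have hn1 : 1 ≤ n := le_trans (le_trans (le_max_right _ _) (le_max_right _ _)) hn
  have hnN₁ : N₁ ≤ n := le_trans (le_trans (le_max_left _ _) (le_max_right _ _)) hn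
  have hnn0 : (0:ℝ) < n := by exact_mod_cast hn1
  rw [Real.dist_eq, sub_zero]
  have hsplit : ∑ k ∈ Finset.range n, a k = C + ∑ k ∈ Finset.Ico m n, a k := by
    rw [hC, Finset.range_eq_Ico, Finset.range_eq_Ico]
    exact (Finset.sum_Ico_consecutive a (Nat.zero_le m) hnm).symm
  have hIco : (1/(n:ℝ)) * ∑ k ∈ Finset.Ico m n, a k ≤ ∑' k, g (k + m) := by
    have step1 : (1/(n:ℝ)) * ∑ k ∈ Finset.Ico m n, a k
        ≤ ∑ k ∈ Finset.Ico m n, g k := by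
      rw [Finset.mul_sum]
      refine Finset.sum_le_sum fun k hk => ?_
      rw [Finset.mem_Ico] at hk
      have hkn : (k:ℝ) + 1 ≤ n := by exact_mod_cast Nat.succ_le_of_lt hk.2
      rw [hg, one_div, inv_mul_eq_div, div_le_div_iff₀ hnn0 (by positivity)]
      exact mul_le_mul_of_nonneg_left hkn (ha k)
    have hsum : Summable fun k => g (k + m) := (summable_nat_add_iff m).mpr h
    have step2 : ∑ k ∈ Finset.Ico m n, g k ≤ ∑' k, g (k + m) := by
      rw [Finset.sum_Ico_eq_sum_range]
      have heq : ∀ k, g (m + k) = g (k + m) := fun k => by rw [Nat.add_comm]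
      rw [Finset.sum_congr rfl fun k _ => heq k]
      exact Summable.sum_le_tsum _ (fun k _ => hg0 _) hsum
    linarith
  have habs : 0 ≤ (1/(n:ℝ)) * ∑ k ∈ Finset.range n, a k :=
    mul_nonneg (by positivity) (Finset.sum_nonneg fun k _ => ha k)
  rw [abs_of_nonneg habs, hsplit, mul_add]
  have h1 : (1/(n:ℝ)) * C < ε/2 := by
    have := hN₁ n hnN₁
    rw [Real.dist_eq, sub_zero, abs_of_nonneg (mul_nonneg hC0 (by positivity))] at this
    linarith [this]
  linarith [hIco, hm']

/-- The shift as a measurable equivalence. -/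
private def shiftEquiv' : (ℤ → ℕ) ≃ᵐ (ℤ → ℕ) :=
{ toEquiv :=
  { toFun := shiftZ
    invFun := fun x t => x (t - 1)
    left_inv := fun x => funext fun t => by simp [shiftZ]
    right_inv := fun x => funext fun t => by simp [shiftZ] }
  measurable_toFun := measurable_pi_lambda _ fun t => measurable_pi_apply _
  measurable_invFun := measurable_pi_lambda _ fun t => measurable_pi_apply _ }

private lemma mp_int' {μ : Measure (ℤ → ℕ)} (hmp : MeasurePreserving shiftZ μ μ) (n : ℤ) :
    MeasurePreserving (fun (x : ℤ → ℕ) (t : ℤ) => x (t + n)) μ μ := by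
  have hsymm : MeasurePreserving (fun (x : ℤ → ℕ) (t : ℤ) => x (t - 1)) μ μ :=
    MeasurePreserving.symm shiftEquiv' hmp
  induction n using Int.induction_on with
  | zero =>
    have : (fun (x : ℤ → ℕ) (t : ℤ) => x (t + 0)) = id := by funext x t; simp
    rw [this]; exact MeasurePreserving.id μ
  | succ k ih =>
    have : (fun (x : ℤ → ℕ) (t : ℤ) => x (t + ((k:ℤ) + 1)))
        = shiftZ ∘ (fun (x : ℤ → ℕ) (t : ℤ) => x (t + k)) := by
      funext x t; show x (t + (k + 1)) = x (t + 1 + k); congr 1; ring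
    rw [this]; exact hmp.comp ih
  | pred k ih =>
    have : (fun (x : ℤ → ℕ) (t : ℤ) => x (t + (-(k:ℤ) - 1)))
        = (fun (x : ℤ → ℕ) (t : ℤ) => x (t - 1)) ∘ (fun (x : ℤ → ℕ) (t : ℤ) => x (t + (-(k:ℤ)))) := by
      funext x t; show x (t + (-(k:ℤ) - 1)) = x (t - 1 + -(k:ℤ)); congr 1; ring
    rw [this]; exact hsymm.comp ih

end AuxLemmas

open scoped ENNReal NNReal

/-- **Approximation step (relation (7)) in the proof of Theorem 1**:
`(1/n)·sup_{θ∈Θ} |∑_{t=1}^n ℓ_t(θ) − ∑_{t=1}^n ℓ̂_t(θ)| → 0` almost surely. -/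
theorem likelihood_truncation_negligible
    {Ω : Type} [MeasurableSpace Ω] {d : ℕ} (P : Measure Ω) [IsProbabilityMeasure P]
    (Θ : Set (Fin d → ℝ)) (hΘc : IsCompact Θ)
    (f : (Fin d → ℝ) → (ℕ → ℝ) → ℝ)
    (hf_meas : Measurable (Function.uncurry f))
    (hf_cont : ∀ y : ℕ → ℝ, Continuous fun θ => f θ y)
    (θ₀ : Fin d → ℝ) (hθ₀ : θ₀ ∈ Θ)
    (Y : ℤ → Ω → ℕ) (hsol : IsStatSol P f θ₀ Y)
    (hD : AssumpD Θ f)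
    (α : ℕ → ℝ) (hA0 : AssumpA0 Θ f α)
    (hlog : Summable fun j : ℕ => Real.log ((j : ℝ) + 1) * α j) :
    ∀ᵐ ω ∂P, Tendsto
      (fun n : ℕ => (1 / (n : ℝ)) * ⨆ θ ∈ Θ,
        |∑ t ∈ Finset.Icc 1 n, lexact f Y θ (t : ℤ) ω -
          ∑ t ∈ Finset.Icc 1 n, lhat f Y θ t ω|)
      atTop (𝓝 0) := by
  obtain ⟨c, hc, hcf⟩ := hD
  have hY : ∀ t, Measurable (Y t) := hsol.meas
  have hpath : Measurable fun ω (t : ℤ) => Y t ω := measurable_pi_lambda _ hY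
  set μ := pathLaw P Y with hμ
  haveI : IsProbabilityMeasure μ := Measure.isProbabilityMeasure_map hpath.aemeasurable
  have hshift : MeasurePreserving shiftZ μ μ := hsol.erg.toMeasurePreserving
  have hmpZ := mp_int' hshift
  -- coordinate measurability
  have hx : ∀ a : ℤ, Measurable fun x : ℤ → ℕ => ((x a : ℝ≥0∞)) :=
    fun a => measurable_from_top.comp (measurable_pi_apply a)
  have hYe : ∀ a : ℤ, Measurable fun ω => ((Y a ω : ℝ≥0∞)) :=
    fun a => measurable_from_top.comp (hY a)
  -- moments
  set I2 : ℝ≥0∞ := ∫⁻ x : ℤ → ℕ, ((x 0 : ℝ≥0∞))^2 ∂μ with hI2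
  set I1 : ℝ≥0∞ := ∫⁻ x : ℤ → ℕ, ((x 0 : ℝ≥0∞)) ∂μ with hI1
  have htransfer : ∀ g : (ℤ → ℕ) → ℝ≥0∞, Measurable g →
      ∫⁻ x, g x ∂μ = ∫⁻ ω, g (fun t => Y t ω) ∂P := fun g hg => lintegral_map hg hpath
  have hcoordsq : ∀ a : ℤ, ∫⁻ x : ℤ → ℕ, ((x a : ℝ≥0∞))^2 ∂μ = I2 := by
    intro a
    rw [hI2, ← (hmpZ a).lintegral_comp ((hx 0).pow_const 2)]
    congr 1; funext x; simp
  have hcoord1 : ∀ a : ℤ, ∫⁻ x : ℤ → ℕ, ((x a : ℝ≥0∞)) ∂μ = I1 := by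
    intro a
    rw [hI1, ← (hmpZ a).lintegral_comp (hx 0)]
    congr 1; funext x; simp
  have hI2top : I2 ≠ ⊤ := by
    have h1 : I2 = ∫⁻ ω, ENNReal.ofReal ((Y 0 ω : ℝ)^2) ∂P := by
      rw [hI2, htransfer _ ((hx 0).pow_const 2)]
      congr 1; funext ω
      rw [ENNReal.ofReal_pow (by positivity), ENNReal.ofReal_natCast]
    rw [h1]
    exact (Integrable.lintegral_lt_top (hsol.moments 2 (by norm_num))).ne
  have hI1top : I1 ≠ ⊤ := by
    have h1 : I1 = ∫⁻ ω, ENNReal.ofReal ((Y 0 ω : ℝ)^1) ∂P := by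
      rw [hI1, htransfer _ (hx 0)]
      congr 1; funext ω
      rw [ENNReal.ofReal_pow (by positivity), ENNReal.ofReal_natCast, pow_one]
    rw [h1]
    exact (Integrable.lintegral_lt_top (hsol.moments 1 le_rfl)).ne
  -- uniform bound on cross moments
  have hmom : ∀ a b : ℤ, ∫⁻ ω, (Y a ω : ℝ≥0∞) * (Y b ω : ℝ≥0∞) ∂P ≤ 2 * I2 := by
    intro a b
    have h0 : ∫⁻ ω, (Y a ω : ℝ≥0∞) * (Y b ω : ℝ≥0∞) ∂P
        = ∫⁻ x : ℤ → ℕ, (x a : ℝ≥0∞) * (x b : ℝ≥0∞) ∂μ :=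
      (htransfer _ ((hx a).mul (hx b))).symm
    rw [h0]
    have h1 : ∀ x : ℤ → ℕ, (x a : ℝ≥0∞) * (x b : ℝ≥0∞)
        ≤ ((x a : ℝ≥0∞))^2 + ((x b : ℝ≥0∞))^2 := by
      intro x
      rcases le_total ((x a : ℝ≥0∞)) ((x b : ℝ≥0∞)) with h | h
      · calc (x a : ℝ≥0∞) * (x b : ℝ≥0∞) ≤ (x b : ℝ≥0∞) * (x b : ℝ≥0∞) :=
              mul_le_mul' h le_rfl
          _ = ((x b : ℝ≥0∞))^2 := (sq _).symm
          _ ≤ _ := le_add_self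
      · calc (x a : ℝ≥0∞) * (x b : ℝ≥0∞) ≤ (x a : ℝ≥0∞) * (x a : ℝ≥0∞) :=
              mul_le_mul' le_rfl h
          _ = ((x a : ℝ≥0∞))^2 := (sq _).symm
          _ ≤ _ := le_self_add
    calc ∫⁻ x : ℤ → ℕ, (x a : ℝ≥0∞) * (x b : ℝ≥0∞) ∂μ
        ≤ ∫⁻ x : ℤ → ℕ, (((x a : ℝ≥0∞))^2 + ((x b : ℝ≥0∞))^2) ∂μ :=
          lintegral_mono h1
      _ = I2 + I2 := by
          rw [lintegral_add_left ((hx a).pow_const 2), hcoordsq a, hcoordsq b]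
      _ = 2 * I2 := (two_mul I2).symm
  -- the constant K
  set K : ℝ≥0∞ := ENNReal.ofReal (1/c) * (2 * I2) + I1 with hKdef
  have hKtop : K ≠ ⊤ := by
    rw [hKdef]
    exact ENNReal.add_ne_top.mpr
      ⟨ENNReal.mul_ne_top ENNReal.ofReal_ne_top
        (ENNReal.mul_ne_top (by norm_num) hI2top), hI1top⟩
  have hK : ∀ a b : ℤ, ∫⁻ ω, ENNReal.ofReal ((Y a ω : ℝ)/c + 1) * (Y b ω : ℝ≥0∞) ∂P ≤ K := by
    intro a b
    have hpt : ∀ ω, ENNReal.ofReal ((Y a ω : ℝ)/c + 1) * (Y b ω : ℝ≥0∞)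
        = ENNReal.ofReal (1/c) * ((Y a ω : ℝ≥0∞) * (Y b ω : ℝ≥0∞)) + (Y b ω : ℝ≥0∞) := by
      intro ω
      rw [ENNReal.ofReal_add (by positivity) zero_le_one, ENNReal.ofReal_one, add_mul, one_mul]
      congr 1
      have : (Y a ω : ℝ)/c = (1/c) * (Y a ω : ℝ) := by ring
      rw [this, ENNReal.ofReal_mul (by positivity), ENNReal.ofReal_natCast, mul_assoc]
    calc ∫⁻ ω, ENNReal.ofReal ((Y a ω : ℝ)/c + 1) * (Y b ω : ℝ≥0∞) ∂P
        = ∫⁻ ω, (ENNReal.ofReal (1/c) * ((Y a ω : ℝ≥0∞) * (Y b ω : ℝ≥0∞))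
            + (Y b ω : ℝ≥0∞)) ∂P := by
          congr 1; funext ω; exact hpt ω
      _ = ENNReal.ofReal (1/c) * ∫⁻ ω, (Y a ω : ℝ≥0∞) * (Y b ω : ℝ≥0∞) ∂P
            + ∫⁻ ω, (Y b ω : ℝ≥0∞) ∂P := by
          rw [lintegral_add_left (f := fun ω => ENNReal.ofReal (1/c) * ((Y a ω : ℝ≥0∞) * (Y b ω : ℝ≥0∞)))
              (((hYe a).mul (hYe b)).const_mul _),
            lintegral_const_mul (f := fun ω => (Y a ω : ℝ≥0∞) * (Y b ω : ℝ≥0∞)) _ ((hYe a).mul (hYe b))]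
      _ ≤ ENNReal.ofReal (1/c) * (2 * I2) + I1 := by
          refine add_le_add (mul_le_mul_right (hmom a b) _) (le_of_eq ?_)
          rw [← htransfer _ (hx b)]
          exact hcoord1 b
      _ = K := hKdef.symm
  -- truncation error and weight processes
  set W : ℕ → Ω → ℝ≥0∞ := fun t ω =>
    ∑' j, ENNReal.ofReal (α j * |past Y t ω j - pastTrunc Y t ω j|) with hWdef
  set U : ℕ → Ω → ℝ≥0∞ := fun t ω =>
    ENNReal.ofReal ((Y (t : ℤ) ω : ℝ)/c + 1) * W t ω with hUdef
  have hpastm : ∀ (t : ℕ) (j : ℕ), Measurable fun ω => past Y t ω j := by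
    intro t j
    show Measurable fun ω => ((Y ((t : ℤ) - 1 - j) ω : ℝ))
    exact measurable_from_top.comp (hY _)
  have htruncm : ∀ (t : ℕ) (j : ℕ), Measurable fun ω => pastTrunc Y t ω j := by
    intro t j
    by_cases h : (j : ℤ) < (t : ℤ) - 1
    · show Measurable fun ω => pastTrunc Y t ω j
      have : (fun ω => pastTrunc Y t ω j) = fun ω => ((Y ((t : ℤ) - 1 - j) ω : ℝ)) := by
        funext ω; simp [pastTrunc, h]
      rw [this]; exact measurable_from_top.comp (hY _)
    · have : (fun ω => pastTrunc Y t ω j) = fun _ => (0 : ℝ) := by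
        funext ω; simp [pastTrunc, h]
      rw [this]; exact measurable_const
  have hWm : ∀ t, Measurable (W t) := by
    intro t
    refine Measurable.ennreal_tsum fun j => ?_
    exact ENNReal.measurable_ofReal.comp
      ((((hpastm t j).sub (htruncm t j)).abs).const_mul (α j))
  have hYcm : ∀ a : ℤ, Measurable fun ω => ((Y a ω : ℝ)) :=
    fun a => measurable_from_top.comp (hY a)
  have hUm : ∀ t, Measurable (U t) := by
    intro t
    exact (ENNReal.measurable_ofReal.comp
      (((hYcm (t : ℤ)).div_const c).add_const 1)).mul (hWm t)
  -- integral bound for U (k+1)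
  have hUint : ∀ k : ℕ, ∫⁻ ω, U (k+1) ω ∂P
      ≤ (∑' j, (if j < k then (0 : ℝ≥0∞) else ENNReal.ofReal (α j))) * K := by
    intro k
    have hsplit : ∀ ω, U (k+1) ω = ∑' j, ENNReal.ofReal ((Y ((k+1 : ℕ) : ℤ) ω : ℝ)/c + 1)
        * ENNReal.ofReal (α j * |past Y (k+1 : ℕ) ω j - pastTrunc Y (k+1) ω j|) := by
      intro ω; rw [hUdef]; exact (ENNReal.tsum_mul_left).symm
    calc ∫⁻ ω, U (k+1) ω ∂P
        = ∑' j, ∫⁻ ω, ENNReal.ofReal ((Y ((k+1 : ℕ) : ℤ) ω : ℝ)/c + 1)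
            * ENNReal.ofReal (α j * |past Y (k+1 : ℕ) ω j - pastTrunc Y (k+1) ω j|) ∂P := by
          rw [show (fun ω => U (k+1) ω) = fun ω => ∑' j,
              ENNReal.ofReal ((Y ((k+1 : ℕ) : ℤ) ω : ℝ)/c + 1)
              * ENNReal.ofReal (α j * |past Y (k+1 : ℕ) ω j - pastTrunc Y (k+1) ω j|) from
            funext hsplit]
          exact lintegral_tsum fun j =>
            ((ENNReal.measurable_ofReal.comp
              (((hYcm _).div_const c).add_const 1)).mul
              (ENNReal.measurable_ofReal.comp
                ((((hpastm _ j).sub (htruncm _ j)).abs).const_mul (α j)))).aemeasurable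
      _ ≤ ∑' j, (if j < k then (0 : ℝ≥0∞) else ENNReal.ofReal (α j)) * K := by
          refine ENNReal.tsum_le_tsum fun j => ?_
          by_cases hj : j < k
          · have hzero : ∀ ω : Ω, past Y (k+1 : ℕ) ω j - pastTrunc Y (k+1) ω j = 0 := by
              intro ω
              have hcond : (j : ℤ) < ((k+1 : ℕ) : ℤ) - 1 := by push_cast; omega
              simp [past, pastTrunc, hj]
            simp only [hj, if_true, zero_mul]
            rw [show (fun ω => ENNReal.ofReal ((Y ((k+1 : ℕ) : ℤ) ω : ℝ)/c + 1)
                * ENNReal.ofReal (α j * |past Y (k+1 : ℕ) ω j - pastTrunc Y (k+1) ω j|))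
                = fun _ : Ω => (0 : ℝ≥0∞) from funext fun ω => by
              rw [hzero ω]; simp]
            simp
          · have hval : ∀ ω : Ω, ENNReal.ofReal
                (α j * |past Y (k+1 : ℕ) ω j - pastTrunc Y (k+1) ω j|)
                = ENNReal.ofReal (α j) * ((Y (((k+1 : ℕ) : ℤ) - 1 - j) ω : ℝ≥0∞)) := by
              intro ω
              have hcond : ¬ ((j : ℤ) < ((k+1 : ℕ) : ℤ) - 1) := by push_cast; omega
              have h1 : past Y (k+1 : ℕ) ω j - pastTrunc Y (k+1) ω j
                  = ((Y (((k+1 : ℕ) : ℤ) - 1 - j) ω : ℝ)) := by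
                simp [past, pastTrunc, hj]
              rw [h1, abs_of_nonneg (by positivity), ENNReal.ofReal_mul (hA0.nonneg j),
                ENNReal.ofReal_natCast]
            simp only [hj, if_false]
            calc ∫⁻ ω, ENNReal.ofReal ((Y ((k+1 : ℕ) : ℤ) ω : ℝ)/c + 1)
                  * ENNReal.ofReal (α j * |past Y (k+1 : ℕ) ω j - pastTrunc Y (k+1) ω j|) ∂P
                = ∫⁻ ω, ENNReal.ofReal (α j) * (ENNReal.ofReal ((Y ((k+1 : ℕ) : ℤ) ω : ℝ)/c + 1)
                    * ((Y (((k+1 : ℕ) : ℤ) - 1 - j) ω : ℝ≥0∞))) ∂P := by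
                  congr 1; funext ω; rw [hval ω]; ring
              _ = ENNReal.ofReal (α j) * ∫⁻ ω, ENNReal.ofReal ((Y ((k+1 : ℕ) : ℤ) ω : ℝ)/c + 1)
                    * ((Y (((k+1 : ℕ) : ℤ) - 1 - j) ω : ℝ≥0∞)) ∂P := by
                  exact lintegral_const_mul _ ((ENNReal.measurable_ofReal.comp
                    (((hYcm _).div_const c).add_const 1)).mul (hYe _))
              _ ≤ ENNReal.ofReal (α j) * K := mul_le_mul_right (hK _ _) _
      _ = (∑' j, (if j < k then (0 : ℝ≥0∞) else ENNReal.ofReal (α j))) * K :=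
          ENNReal.tsum_mul_right
  -- the grand weighted sum
  set G : Ω → ℝ≥0∞ := fun ω =>
    ∑' k : ℕ, ENNReal.ofReal (1/((k:ℝ)+1)) * U (k+1) ω with hGdef
  have hGm : Measurable G :=
    Measurable.ennreal_tsum fun k => (hUm (k+1)).const_mul _
  have hsummable : Summable fun j : ℕ => (1 + Real.log ((j:ℝ)+1)) * α j := by
    refine (hA0.summable.add hlog).congr fun j => ?_
    ring
  have hlognn : ∀ j : ℕ, 0 ≤ 1 + Real.log ((j:ℝ)+1) := by
    intro j
    have : 0 ≤ Real.log ((j:ℝ)+1) := Real.log_nonneg (by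
      have := Nat.cast_nonneg (α := ℝ) j; linarith)
    linarith
  set B : ℝ := ∑' j : ℕ, (1 + Real.log ((j:ℝ)+1)) * α j with hBdef
  have hGint : ∫⁻ ω, G ω ∂P ≤ ENNReal.ofReal B * K := by
    calc ∫⁻ ω, G ω ∂P
        = ∑' k : ℕ, ∫⁻ ω, ENNReal.ofReal (1/((k:ℝ)+1)) * U (k+1) ω ∂P := by
          rw [hGdef]
          exact lintegral_tsum fun k => ((hUm (k+1)).const_mul _).aemeasurable
      _ = ∑' k : ℕ, ENNReal.ofReal (1/((k:ℝ)+1)) * ∫⁻ ω, U (k+1) ω ∂P := by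
          refine tsum_congr fun k => ?_
          exact lintegral_const_mul _ (hUm (k+1))
      _ ≤ ∑' k : ℕ, ENNReal.ofReal (1/((k:ℝ)+1))
            * ((∑' j, (if j < k then (0 : ℝ≥0∞) else ENNReal.ofReal (α j))) * K) :=
          ENNReal.tsum_le_tsum fun k => mul_le_mul_right (hUint k) _
      _ = ∑' k : ℕ, ∑' j : ℕ, ENNReal.ofReal (1/((k:ℝ)+1))
            * ((if j < k then (0 : ℝ≥0∞) else ENNReal.ofReal (α j)) * K) := by
          refine tsum_congr fun k => ?_
          rw [← ENNReal.tsum_mul_right, ← ENNReal.tsum_mul_left]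
      _ = ∑' j : ℕ, ∑' k : ℕ, ENNReal.ofReal (1/((k:ℝ)+1))
            * ((if j < k then (0 : ℝ≥0∞) else ENNReal.ofReal (α j)) * K) :=
          ENNReal.tsum_comm
      _ = ∑' j : ℕ, (∑ k ∈ Finset.range (j+1), ENNReal.ofReal (1/((k:ℝ)+1)))
            * (ENNReal.ofReal (α j) * K) := by
          refine tsum_congr fun j => ?_
          have hvanish : ∀ k ∉ Finset.range (j+1), ENNReal.ofReal (1/((k:ℝ)+1))
              * ((if j < k then (0 : ℝ≥0∞) else ENNReal.ofReal (α j)) * K) = 0 := by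
            intro k hk
            have hjk : j < k := by rw [Finset.mem_range, not_lt] at hk; omega
            simp [hjk]
          rw [tsum_eq_sum hvanish, Finset.sum_mul]
          refine Finset.sum_congr rfl fun k hk => ?_
          have hjk : ¬ j < k := by rw [Finset.mem_range] at hk; omega
          simp [hjk]
      _ ≤ ∑' j : ℕ, ENNReal.ofReal (1 + Real.log ((j:ℝ)+1)) * (ENNReal.ofReal (α j) * K) := by
          refine ENNReal.tsum_le_tsum fun j => ?_
          refine mul_le_mul_left ?_ _
          rw [← ENNReal.ofReal_sum_of_nonneg (fun k _ => by positivity)]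
          exact ENNReal.ofReal_le_ofReal (harmonic_bound' j)
      _ = (∑' j : ℕ, ENNReal.ofReal ((1 + Real.log ((j:ℝ)+1)) * α j)) * K := by
          rw [← ENNReal.tsum_mul_right]
          refine tsum_congr fun j => ?_
          rw [ENNReal.ofReal_mul (hlognn j), mul_assoc]
      _ = ENNReal.ofReal B * K := by
          rw [hBdef, ENNReal.ofReal_tsum_of_nonneg
            (fun j => mul_nonneg (hlognn j) (hA0.nonneg j)) hsummable]
  have hGfin : ∫⁻ ω, G ω ∂P ≠ ⊤ :=
    (lt_of_le_of_lt hGint (ENNReal.mul_lt_top ENNReal.ofReal_lt_top hKtop.lt_top)).ne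
  have hae : ∀ᵐ ω ∂P, G ω < ⊤ := ae_lt_top hGm hGfin
  -- pointwise argument on the a.e. good set
  filter_upwards [hae] with ω hGω
  have hGne : G ω ≠ ⊤ := hGω.ne
  have hUfin : ∀ k : ℕ, U (k+1) ω ≠ ⊤ := by
    intro k htop
    have hle : ENNReal.ofReal (1/((k:ℝ)+1)) * U (k+1) ω ≤ G ω := by
      rw [hGdef]; exact ENNReal.le_tsum k
    rw [htop, ENNReal.mul_top (ENNReal.ofReal_pos.mpr (by positivity)).ne'] at hle
    exact hGne (top_le_iff.mp hle)
  have hone : ∀ k : ℕ, (1:ℝ≥0∞) ≤ ENNReal.ofReal ((Y ((k+1 : ℕ) : ℤ) ω : ℝ)/c + 1) := by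
    intro k
    refine ENNReal.one_le_ofReal.mpr ?_
    have : (0:ℝ) ≤ (Y ((k+1 : ℕ) : ℤ) ω : ℝ)/c := by positivity
    linarith
  have hWfin : ∀ k : ℕ, W (k+1) ω ≠ ⊤ := by
    intro k
    refine ne_top_of_le_ne_top (hUfin k) ?_
    rw [hUdef]
    exact le_mul_of_one_le_left (by simp) (hone k)
  set V : ℕ → ℝ := fun t => (U t ω).toReal with hVdef
  have hVnn : ∀ t, 0 ≤ V t := fun t => ENNReal.toReal_nonneg
  have hVval : ∀ k : ℕ, V (k+1)
      = ((Y ((k+1 : ℕ) : ℤ) ω : ℝ)/c + 1) * (W (k+1) ω).toReal := by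
    intro k
    rw [hVdef]
    show (U (k+1) ω).toReal = _
    rw [hUdef, ENNReal.toReal_mul, ENNReal.toReal_ofReal (by positivity)]
  have hVsum : Summable fun k : ℕ => V (k+1) / ((k:ℝ)+1) := by
    have h1 : Summable fun k : ℕ =>
        (ENNReal.ofReal (1/((k:ℝ)+1)) * U (k+1) ω).toReal :=
      ENNReal.summable_toReal hGne
    refine h1.congr fun k => ?_
    rw [ENNReal.toReal_mul, ENNReal.toReal_ofReal (by positivity)]
    show (1/((k:ℝ)+1)) * V (k+1) = V (k+1) / ((k:ℝ)+1)
    ring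
  -- per-term bound
  have hterm : ∀ t : ℕ, 1 ≤ t → ∀ θ ∈ Θ,
      |lexact f Y θ (t : ℤ) ω - lhat f Y θ t ω| ≤ V t := by
    intro t ht θ hθ
    obtain ⟨k, rfl⟩ : ∃ k, t = k+1 := ⟨t-1, by omega⟩
    have hy : ∀ j, 0 ≤ past Y ((k+1 : ℕ) : ℤ) ω j := fun j => Nat.cast_nonneg _
    have hy' : ∀ j, 0 ≤ pastTrunc Y (k+1) ω j := by
      intro j; unfold pastTrunc; split <;> simp
    have ha : c ≤ f θ (past Y ((k+1 : ℕ) : ℤ) ω) := hcf θ hθ _ hy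
    have hb : c ≤ f θ (pastTrunc Y (k+1) ω) := hcf θ hθ _ hy'
    have hlip := hA0.lip θ hθ _ _ hy hy'
    have habd : |f θ (past Y ((k+1 : ℕ) : ℤ) ω) - f θ (pastTrunc Y (k+1) ω)|
        ≤ (W (k+1) ω).toReal :=
      (ENNReal.ofReal_le_iff_le_toReal (hWfin k)).mp hlip
    have hyt : (0:ℝ) ≤ (Y ((k+1 : ℕ) : ℤ) ω : ℝ) := Nat.cast_nonneg _
    have hlg : |Real.log (f θ (past Y ((k+1 : ℕ) : ℤ) ω))
          - Real.log (f θ (pastTrunc Y (k+1) ω))|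
        ≤ |f θ (past Y ((k+1 : ℕ) : ℤ) ω) - f θ (pastTrunc Y (k+1) ω)| / c :=
      log_lip' hc ha hb
    have hdiff : lexact f Y θ ((k+1 : ℕ) : ℤ) ω - lhat f Y θ (k+1) ω
        = (Y ((k+1 : ℕ) : ℤ) ω : ℝ) * (Real.log (f θ (past Y ((k+1 : ℕ) : ℤ) ω))
            - Real.log (f θ (pastTrunc Y (k+1) ω)))
          - (f θ (past Y ((k+1 : ℕ) : ℤ) ω) - f θ (pastTrunc Y (k+1) ω)) := by
      simp only [lexact, lhat]; ring
    rw [hdiff]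
    calc |(Y ((k+1 : ℕ) : ℤ) ω : ℝ) * (Real.log (f θ (past Y ((k+1 : ℕ) : ℤ) ω))
            - Real.log (f θ (pastTrunc Y (k+1) ω)))
          - (f θ (past Y ((k+1 : ℕ) : ℤ) ω) - f θ (pastTrunc Y (k+1) ω))|
        ≤ |(Y ((k+1 : ℕ) : ℤ) ω : ℝ) * (Real.log (f θ (past Y ((k+1 : ℕ) : ℤ) ω))
            - Real.log (f θ (pastTrunc Y (k+1) ω)))|
          + |f θ (past Y ((k+1 : ℕ) : ℤ) ω) - f θ (pastTrunc Y (k+1) ω)| := abs_sub _ _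
      _ = (Y ((k+1 : ℕ) : ℤ) ω : ℝ) * |Real.log (f θ (past Y ((k+1 : ℕ) : ℤ) ω))
            - Real.log (f θ (pastTrunc Y (k+1) ω))|
          + |f θ (past Y ((k+1 : ℕ) : ℤ) ω) - f θ (pastTrunc Y (k+1) ω)| := by
          rw [abs_mul, abs_of_nonneg hyt]
      _ ≤ (Y ((k+1 : ℕ) : ℤ) ω : ℝ)
            * (|f θ (past Y ((k+1 : ℕ) : ℤ) ω) - f θ (pastTrunc Y (k+1) ω)| / c)
          + |f θ (past Y ((k+1 : ℕ) : ℤ) ω) - f θ (pastTrunc Y (k+1) ω)| :=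
          add_le_add_left (mul_le_mul_of_nonneg_left hlg hyt) _
      _ = ((Y ((k+1 : ℕ) : ℤ) ω : ℝ)/c + 1)
            * |f θ (past Y ((k+1 : ℕ) : ℤ) ω) - f θ (pastTrunc Y (k+1) ω)| := by ring
      _ ≤ ((Y ((k+1 : ℕ) : ℤ) ω : ℝ)/c + 1) * (W (k+1) ω).toReal :=
          mul_le_mul_of_nonneg_left habd (by positivity)
      _ = V (k+1) := (hVval k).symm
  -- summed bound and conclusion
  have hsumbd : ∀ n : ℕ, ∀ θ ∈ Θ,
      |∑ t ∈ Finset.Icc 1 n, lexact f Y θ (t : ℤ) ω - ∑ t ∈ Finset.Icc 1 n, lhat f Y θ t ω|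
      ≤ ∑ t ∈ Finset.Icc 1 n, V t := by
    intro n θ hθ
    rw [← Finset.sum_sub_distrib]
    refine (Finset.abs_sum_le_sum_abs _ _).trans (Finset.sum_le_sum fun t ht => ?_)
    rw [Finset.mem_Icc] at ht
    exact hterm t ht.1 θ hθ
  have hSnn : ∀ n : ℕ, 0 ≤ ⨆ θ ∈ Θ,
      |∑ t ∈ Finset.Icc 1 n, lexact f Y θ (t : ℤ) ω - ∑ t ∈ Finset.Icc 1 n, lhat f Y θ t ω| :=
    fun n => Real.iSup_nonneg fun θ => Real.iSup_nonneg fun _ => abs_nonneg _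
  have hSle : ∀ n : ℕ, (⨆ θ ∈ Θ,
      |∑ t ∈ Finset.Icc 1 n, lexact f Y θ (t : ℤ) ω - ∑ t ∈ Finset.Icc 1 n, lhat f Y θ t ω|)
      ≤ ∑ t ∈ Finset.Icc 1 n, V t := by
    intro n
    have hB : 0 ≤ ∑ t ∈ Finset.Icc 1 n, V t := Finset.sum_nonneg fun t _ => hVnn t
    exact Real.iSup_le (fun θ => Real.iSup_le (fun hθ => hsumbd n θ hθ) hB) hB
  have hIccRange : ∀ n : ℕ, ∑ t ∈ Finset.Icc 1 n, V t = ∑ k ∈ Finset.range n, V (k+1) := by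
    intro n
    rw [← Finset.Ico_add_one_right_eq_Icc, Finset.sum_Ico_eq_sum_range]
    exact Finset.sum_congr rfl fun k _ => by rw [Nat.add_comm]
  have hkron := kronecker_nonneg' (fun k => V (k+1)) (fun k => hVnn _) hVsum
  refine squeeze_zero (fun n => mul_nonneg (by positivity) (hSnn n)) (fun n => ?_) hkron
  calc (1/(n:ℝ)) * (⨆ θ ∈ Θ,
        |∑ t ∈ Finset.Icc 1 n, lexact f Y θ (t : ℤ) ω - ∑ t ∈ Finset.Icc 1 n, lhat f Y θ t ω|)
      ≤ (1/(n:ℝ)) * ∑ t ∈ Finset.Icc 1 n, V t :=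
        mul_le_mul_of_nonneg_left (hSle n) (by positivity)
    _ = (1/(n:ℝ)) * ∑ k ∈ Finset.range n, V (k+1) := by rw [hIccRange n]
end
end
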